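/- arXiv:2604.22052 — 5 statements merged into one kernel-verified Lean document; each statement's English description precedes it below -/
import Mathlib

section
/- For every integer n ≥ 1, every real R ≥ 2, and every ζ ∈ 𝕋ⁿ = (ℝ/ℤ)ⁿ, the Fourier transform of the discrete Gaussian satisfies |γ̂_R(ζ)| ≤ exp(−R²·‖ζ‖²_{𝕋ⁿ}/5). -/
open scoped BigOperators

noncomputable section

/-- Euclidean norm of a real vector. -/
def l2 {m : ℕ} (x : Fin m → ℝ) : ℝ := Real.sqrt (∑ i, x i ^ 2)

/-- Euclidean norm of an integer vector. -/
def l2Z {m : ℕ} (x : Fin m → ℤ) : ℝ := l2 (fun i => (x i : ℝ))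

/-- The torus norm: distance from a representative `ζ` of a point of
`𝕋ⁿ = (ℝ/ℤ)ⁿ` to the nearest point of the integer lattice `ℤⁿ`. -/
def tnorm {m : ℕ} (ζ : Fin m → ℝ) : ℝ := ⨅ z : Fin m → ℤ, l2 (fun i => ζ i - z i)

/-- The discrete Gaussian probability mass function of radius `R` on `ℤⁿ`:
`γ_R(x) = exp(-π‖x‖²/R²) / ∑_y exp(-π‖y‖²/R²)`. -/
def dgauss (n : ℕ) (R : ℝ) (x : Fin n → ℤ) : ℝ :=
  Real.exp (-Real.pi * l2Z x ^ 2 / R ^ 2) /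
    ∑' y : Fin n → ℤ, Real.exp (-Real.pi * l2Z y ^ 2 / R ^ 2)

/-- `μ` is a probability mass function on `ℤⁿ`. -/
def IsPMF {n : ℕ} (μ : (Fin n → ℤ) → ℝ) : Prop := (∀ x, 0 ≤ μ x) ∧ HasSum μ 1

/-- The pairing `⟨ζ, x⟩ = ∑ i, ζ i * x i` of a torus representative and a lattice point. -/
def pair {n : ℕ} (ζ : Fin n → ℝ) (x : Fin n → ℤ) : ℝ := ∑ i, ζ i * (x i : ℝ)

/-- The Fourier transform `μ̂(ζ) = ∑ₓ μ(x)·exp(-2πi⟨ζ,x⟩)` of `μ : ℤⁿ → ℝ`,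
evaluated at a representative of a torus point. -/
def ft {n : ℕ} (μ : (Fin n → ℤ) → ℝ) (ζ : Fin n → ℝ) : ℂ :=
  ∑' x : Fin n → ℤ, (μ x : ℂ) * Complex.exp (-(2 * (Real.pi : ℂ) * Complex.I) * (pair ζ x : ℂ))

/-! By Poisson summation (Jacobi's theta transformation) the Fourier transform of `γ_R` factors
over the coordinates as `∏ᵢ θ(ζᵢ) / θ(0)`, where `θ(t) = ∑ₖ exp(-c(k + t)²)` with `c = πR²`
(`periodizedGaussian c t`) is positive, even and `1`-periodic. Pairing the terms `k` and `-k` gives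
`θ(t) = e^{-ct²} ∑ₖ e^{-ck²} cosh(2ckt)`, and the power series bound
`cosh(λy) ≤ λ² cosh y + 1 - λ²` for `|λ| ≤ 1` interpolates between `t = 0` and `t = 1/2`, where
`e^{c/4} θ(1/2) ≤ 2 θ(0)`. Hence `θ(t) ≤ (1 + 4t²) e^{-ct²} θ(0)` for `|t| ≤ 1/2`, and
`(1 + 4t²) e^{-πR²t²} ≤ e^{-R²t²/5}` as soon as `R ≥ 2`. -/

open Real
open scoped Complex

def periodizedGaussian (c t : ℝ) : ℝ := ∑' k : ℤ, rexp (-(c * (k + t) ^ 2))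

section PeriodizedGaussian

variable {c : ℝ}

lemma summable_exp_neg_mul_int_add_sq (hc : 0 < c) (t : ℝ) :
    Summable fun k : ℤ => rexp (-(c * (k + t) ^ 2)) := by
  refine (summable_pow_mul_jacobiTheta₂_term_bound (c * |t| / π) (T := c / π) (by positivity)
    0).of_nonneg_of_le (fun _ => (exp_pos _).le) fun k => ?_
  have hkt : -(k * t) ≤ |(k : ℝ)| * |t| := by rw [← abs_mul]; exact neg_le_abs _
  have hexp : -π * (c / π * k ^ 2 - 2 * (c * |t| / π) * |(k : ℝ)|)
      = -(c * k ^ 2) + 2 * c * (|(k : ℝ)| * |t|) := by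
    field_simp [pi_ne_zero]
    ring
  rw [pow_zero, one_mul, Int.cast_abs, exp_le_exp, hexp]
  nlinarith [mul_le_mul_of_nonneg_left hkt hc.le, mul_nonneg hc.le (sq_nonneg t)]

lemma periodizedGaussian_pos (hc : 0 < c) (t : ℝ) : 0 < periodizedGaussian c t :=
  (summable_exp_neg_mul_int_add_sq hc t).tsum_pos (fun _ => (exp_pos _).le) 0 (exp_pos _)

lemma periodizedGaussian_add_int (c t : ℝ) (m : ℤ) :
    periodizedGaussian c (t + m) = periodizedGaussian c t := by
  rw [periodizedGaussian, periodizedGaussian,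
    ← (Equiv.addRight m).tsum_eq fun k : ℤ => rexp (-(c * (k + t) ^ 2))]
  refine tsum_congr fun k => ?_
  push_cast [Equiv.coe_addRight]
  ring_nf

lemma periodizedGaussian_neg (c t : ℝ) : periodizedGaussian c (-t) = periodizedGaussian c t := by
  rw [periodizedGaussian, periodizedGaussian,
    ← (Equiv.neg ℤ).tsum_eq fun k : ℤ => rexp (-(c * (k + t) ^ 2))]
  refine tsum_congr fun k => ?_
  push_cast [Equiv.neg_apply]
  ring_nf

lemma hasSum_exp_mul_cosh (hc : 0 < c) (t : ℝ) :
    HasSum (fun k : ℤ => rexp (-(c * k ^ 2)) * cosh (2 * c * k * t))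
      (rexp (c * t ^ 2) * periodizedGaussian c t) := by
  have hpos : HasSum (fun k : ℤ => rexp (-(c * (k + t) ^ 2))) (periodizedGaussian c t) :=
    (summable_exp_neg_mul_int_add_sq hc t).hasSum
  have hneg : HasSum (fun k : ℤ => rexp (-(c * (k + -t) ^ 2))) (periodizedGaussian c (-t)) :=
    (summable_exp_neg_mul_int_add_sq hc (-t)).hasSum
  have h := (hpos.add hneg).mul_left (rexp (c * t ^ 2) / 2)
  rw [periodizedGaussian_neg, show rexp (c * t ^ 2) / 2 * (periodizedGaussian c t
    + periodizedGaussian c t) = rexp (c * t ^ 2) * periodizedGaussian c t by ring] at h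
  refine h.congr_fun fun k => ?_
  simp only [cosh_eq, mul_add, div_mul_eq_mul_div, mul_div_assoc', ← exp_add, add_div]
  ring_nf

lemma cosh_mul_le {a : ℝ} (ha : |a| ≤ 1) (y : ℝ) :
    cosh (a * y) ≤ a ^ 2 * cosh y + (1 - a ^ 2) := by
  refine hasSum_le (fun m => ?_) (hasSum_cosh (a * y))
    (((hasSum_cosh y).mul_left (a ^ 2)).add (hasSum_ite_eq 0 (1 - a ^ 2)))
  rcases Nat.eq_zero_or_pos m with rfl | hm
  · simp
  · have hpow : (a ^ 2) ^ m ≤ a ^ 2 :=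
      pow_le_of_le_one (sq_nonneg a) (by nlinarith [abs_nonneg a, sq_abs a]) hm.ne'
    rw [if_neg hm.ne', add_zero, mul_pow, mul_div_assoc, pow_mul a]
    exact mul_le_mul_of_nonneg_right hpow (div_nonneg (by rw [pow_mul]; positivity) (by positivity))

lemma exp_mul_periodizedGaussian_half_le (hc : 0 < c) :
    rexp (c / 4) * periodizedGaussian c (1 / 2) ≤ 2 * periodizedGaussian c 0 := by
  have hshift : periodizedGaussian c (0 + (1 : ℤ)) = periodizedGaussian c 0 :=
    periodizedGaussian_add_int c 0 1
  rw [two_mul]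
  nth_rewrite 2 [← hshift]
  rw [periodizedGaussian, periodizedGaussian, periodizedGaussian, ← tsum_mul_left,
    ← (summable_exp_neg_mul_int_add_sq hc 0).tsum_add (summable_exp_neg_mul_int_add_sq hc _)]
  refine ((summable_exp_neg_mul_int_add_sq hc _).mul_left _).tsum_le_tsum (fun k => ?_)
    ((summable_exp_neg_mul_int_add_sq hc 0).add (summable_exp_neg_mul_int_add_sq hc _))
  rw [← exp_add]
  -- `k² + k` dominates `k²` when `k ≥ 0` and `(k + 1)²` when `k ≤ -1`
  rcases le_or_gt 0 k with hk | hk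
  · have hk' : (0 : ℝ) ≤ k := by exact_mod_cast hk
    refine le_add_of_le_of_nonneg (exp_le_exp.2 ?_) (exp_pos _).le
    nlinarith
  · have hk' : (k : ℝ) ≤ -1 := by exact_mod_cast Int.le_sub_one_iff.2 hk
    refine le_add_of_nonneg_of_le (exp_pos _).le (exp_le_exp.2 ?_)
    push_cast
    nlinarith

lemma periodizedGaussian_le (hc : 0 < c) {t : ℝ} (ht : |t| ≤ 1 / 2) :
    periodizedGaussian c t ≤ (1 + 4 * t ^ 2) * rexp (-(c * t ^ 2)) * periodizedGaussian c 0 := by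
  have h2t : |2 * t| ≤ 1 := by rw [abs_mul, abs_two]; linarith
  have h0 := hasSum_exp_mul_cosh hc 0
  simp only [mul_zero, cosh_zero, mul_one, ne_eq, OfNat.ofNat_ne_zero, not_false_eq_true,
    zero_pow, exp_zero, one_mul] at h0
  have hhalf := hasSum_exp_mul_cosh hc (1 / 2)
  have hcosh : rexp (c * t ^ 2) * periodizedGaussian c t ≤
      (2 * t) ^ 2 * (rexp (c * (1 / 2) ^ 2) * periodizedGaussian c (1 / 2))
        + (1 - (2 * t) ^ 2) * periodizedGaussian c 0 := by
    refine hasSum_le (fun k => ?_) (hasSum_exp_mul_cosh hc t)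
      ((hhalf.mul_left _).add (h0.mul_left _))
    rw [show 2 * c * k * t = 2 * t * (c * k) by ring, show 2 * c * k * (1 / 2) = c * k by ring]
    nlinarith [mul_le_mul_of_nonneg_left (cosh_mul_le h2t (c * k)) (exp_pos (-(c * k ^ 2))).le]
  have hhalf_le := mul_le_mul_of_nonneg_left (exp_mul_periodizedGaussian_half_le hc)
    (sq_nonneg (2 * t))
  rw [show c * (1 / 2) ^ 2 = c / 4 by ring] at hcosh
  calc periodizedGaussian c t
      = rexp (-(c * t ^ 2)) * (rexp (c * t ^ 2) * periodizedGaussian c t) := by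
        rw [← mul_assoc, ← exp_add, neg_add_cancel, exp_zero, one_mul]
    _ ≤ rexp (-(c * t ^ 2)) * ((1 + 4 * t ^ 2) * periodizedGaussian c 0) :=
        mul_le_mul_of_nonneg_left (by linarith) (exp_pos _).le
    _ = (1 + 4 * t ^ 2) * rexp (-(c * t ^ 2)) * periodizedGaussian c 0 := by ring

end PeriodizedGaussian

lemma periodizedGaussian_le_exp_sub_round {R : ℝ} (hR : 2 ≤ R) (t : ℝ) :
    periodizedGaussian (π * R ^ 2) t
      ≤ rexp (-(R ^ 2 * (t - round t) ^ 2) / 5) * periodizedGaussian (π * R ^ 2) 0 := by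
  set s := t - round t
  have hts : periodizedGaussian (π * R ^ 2) t = periodizedGaussian (π * R ^ 2) s := by
    rw [← periodizedGaussian_add_int _ s (round t), sub_add_cancel]
  have hR2 : 4 ≤ (π - 1 / 5) * R ^ 2 := by nlinarith [pi_gt_three]
  have hfactor : (1 + 4 * s ^ 2) * rexp (-(π * R ^ 2 * s ^ 2)) ≤ rexp (-(R ^ 2 * s ^ 2) / 5) :=
    calc (1 + 4 * s ^ 2) * rexp (-(π * R ^ 2 * s ^ 2))
        ≤ rexp (4 * s ^ 2) * rexp (-(π * R ^ 2 * s ^ 2)) :=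
          mul_le_mul_of_nonneg_right (by linarith [add_one_le_exp (4 * s ^ 2)]) (exp_pos _).le
      _ ≤ rexp (-(R ^ 2 * s ^ 2) / 5) := by
          rw [← exp_add, exp_le_exp]
          nlinarith [mul_le_mul_of_nonneg_left hR2 (sq_nonneg s)]
  rw [hts]
  exact (periodizedGaussian_le (by positivity) (abs_sub_round t)).trans
    (mul_le_mul_of_nonneg_right hfactor (periodizedGaussian_pos (by positivity) 0).le)

section FinPiProduct

variable {A κ : Type*} [NormedCommRing A]

lemma summable_norm_prod_fin_pi : ∀ {n : ℕ} (g : Fin n → κ → A),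
    (∀ i, Summable fun k => ‖g i k‖) → Summable fun x : Fin n → κ => ‖∏ i, g i (x i)‖
  | 0, _, _ => Summable.of_finite
  | n + 1, g, hg => by
    rw [← (Fin.consEquiv fun _ => κ).summable_iff]
    have htail := summable_norm_prod_fin_pi (fun i => g i.succ) fun i => hg i.succ
    refine ((hg 0).mul_norm htail).congr fun p => ?_
    simp [Fin.prod_univ_succ]

lemma tsum_prod_fin_pi [CompleteSpace A] : ∀ {n : ℕ} (g : Fin n → κ → A),
    (∀ i, Summable fun k => ‖g i k‖) → ∑' x : Fin n → κ, ∏ i, g i (x i) = ∏ i, ∑' k, g i k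
  | 0, _, _ => by simp
  | n + 1, g, hg => by
    rw [← (Fin.consEquiv fun _ => κ).tsum_eq, Fin.prod_univ_succ,
      ← tsum_prod_fin_pi (fun i => g i.succ) fun i => hg i.succ,
      tsum_mul_tsum_of_summable_norm (hg 0)
        (summable_norm_prod_fin_pi (fun i => g i.succ) fun i => hg i.succ)]
    simp [Fin.prod_univ_succ]

end FinPiProduct

lemma ft_prod {n : ℕ} (f : Fin n → ℤ → ℝ) (hf : ∀ i, Summable fun k => |f i k|) (ζ : Fin n → ℝ) :
    ft (fun x => ∏ i, f i (x i)) ζ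
      = ∏ i, ∑' k : ℤ, (f i k : ℂ) * cexp (-(2 * (π : ℂ) * Complex.I) * ((ζ i * k : ℝ) : ℂ)) := by
  have hterm : ∀ x : Fin n → ℤ, ((∏ i, f i (x i) : ℝ) : ℂ)
      * cexp (-(2 * (π : ℂ) * Complex.I) * (pair ζ x : ℂ))
      = ∏ i, (f i (x i) : ℂ) * cexp (-(2 * (π : ℂ) * Complex.I) * ((ζ i * x i : ℝ) : ℂ)) := by
    intro x
    rw [Complex.ofReal_prod, pair, Complex.ofReal_sum, Finset.mul_sum, Complex.exp_sum,
      ← Finset.prod_mul_distrib]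
  rw [ft, tsum_congr hterm]
  refine tsum_prod_fin_pi
    (fun i k => (f i k : ℂ) * cexp (-(2 * (π : ℂ) * Complex.I) * ((ζ i * k : ℝ) : ℂ)))
    fun i => (hf i).congr fun k => ?_
  simp [Complex.norm_exp]

lemma tsum_exp_mul_cexp_eq_mul_periodizedGaussian {R : ℝ} (hR : 0 < R) (t : ℝ) :
    ∑' k : ℤ, (rexp (-π * k ^ 2 / R ^ 2) : ℂ)
        * cexp (-(2 * (π : ℂ) * Complex.I) * ((t * k : ℝ) : ℂ))
      = R * periodizedGaussian (π * R ^ 2) t := by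
  have ha : 0 < (((R ^ 2)⁻¹ : ℝ) : ℂ).re := by rw [Complex.ofReal_re]; positivity
  have hsqrt : (((R ^ 2)⁻¹ : ℝ) : ℂ) ^ (1 / 2 : ℂ) = (R : ℂ)⁻¹ := by
    rw [show (1 / 2 : ℂ) = ((1 / 2 : ℝ) : ℂ) by norm_num, ← Complex.ofReal_cpow (by positivity),
      ← sqrt_eq_rpow, sqrt_inv, sqrt_sq hR.le, Complex.ofReal_inv]
  have hI : Complex.I * -(Complex.I * t) = t := by
    rw [mul_neg, ← mul_assoc, Complex.I_mul_I, neg_one_mul, neg_neg]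
  have hpoisson := Complex.tsum_exp_neg_quadratic ha (-(Complex.I * t))
  rw [hsqrt, one_div, inv_inv, hI] at hpoisson
  rw [periodizedGaussian, Complex.ofReal_tsum]
  refine (tsum_congr fun k => ?_).trans (hpoisson.trans (congrArg _ (tsum_congr fun k => ?_)))
  · rw [Complex.ofReal_exp, ← Complex.exp_add]
    congr 1
    push_cast
    field_simp
  · rw [Complex.ofReal_exp]
    congr 1
    push_cast
    field_simp

lemma exp_neg_l2Z_sq_eq_prod {n : ℕ} (R : ℝ) (x : Fin n → ℤ) :
    rexp (-π * l2Z x ^ 2 / R ^ 2) = ∏ i, rexp (-π * (x i : ℝ) ^ 2 / R ^ 2) := by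
  rw [← exp_sum, l2Z, l2, sq_sqrt (Finset.sum_nonneg fun i _ => sq_nonneg _), Finset.mul_sum,
    Finset.sum_div]

lemma ft_div_const {n : ℕ} (μ : (Fin n → ℤ) → ℝ) (a : ℝ) (ζ : Fin n → ℝ) :
    ft (fun x => μ x / a) ζ = ft μ ζ / a := by
  simp only [ft, Complex.ofReal_div, div_mul_eq_mul_div, tsum_div_const]

lemma ft_zero {n : ℕ} (μ : (Fin n → ℤ) → ℝ) : ft μ 0 = ((∑' x, μ x : ℝ) : ℂ) := by
  simp [ft, pair, Complex.ofReal_tsum]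

lemma ft_dgauss {n : ℕ} {R : ℝ} (hR : 0 < R) (ζ : Fin n → ℝ) :
    ft (dgauss n R) ζ = ((∏ i, periodizedGaussian (π * R ^ 2) (ζ i)
      / periodizedGaussian (π * R ^ 2) 0 : ℝ) : ℂ) := by
  set w : ℤ → ℝ := fun k => rexp (-π * k ^ 2 / R ^ 2)
  have hw : Summable fun k => |w k| := by
    refine (summable_exp_neg_mul_int_add_sq (c := π / R ^ 2) (by positivity) 0).congr fun k => ?_
    simp only [w, abs_exp, add_zero]
    ring_nf
  have hft : ∀ ζ : Fin n → ℝ, ft (fun x => ∏ i, w (x i)) ζ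
      = ∏ i, (R : ℂ) * periodizedGaussian (π * R ^ 2) (ζ i) := fun ζ => by
    rw [ft_prod (fun _ => w) fun _ => hw]
    exact Finset.prod_congr rfl fun i _ => tsum_exp_mul_cexp_eq_mul_periodizedGaussian hR (ζ i)
  have hdgauss : dgauss n R = fun x => (∏ i, w (x i)) / ∑' y : Fin n → ℤ, ∏ i, w (y i) := by
    funext x
    simp only [dgauss, exp_neg_l2Z_sq_eq_prod, w]
  have hRne : (R : ℂ) ≠ 0 := Complex.ofReal_ne_zero.2 hR.ne'
  rw [hdgauss, ft_div_const, ← ft_zero, hft, hft, ← Finset.prod_div_distrib]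
  push_cast
  exact Finset.prod_congr rfl fun i _ => mul_div_mul_left _ _ hRne

lemma sq_tnorm_le {m : ℕ} (ζ : Fin m → ℝ) (z : Fin m → ℤ) :
    tnorm ζ ^ 2 ≤ ∑ i, (ζ i - z i) ^ 2 := by
  have hnonneg : 0 ≤ tnorm ζ := iInf_nonneg fun _ => sqrt_nonneg _
  have hle : tnorm ζ ≤ l2 fun i => ζ i - z i :=
    ciInf_le ⟨0, by rintro _ ⟨y, rfl⟩; exact sqrt_nonneg _⟩ z
  calc tnorm ζ ^ 2 ≤ (l2 fun i => ζ i - z i) ^ 2 := pow_le_pow_left₀ hnonneg hle 2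
    _ = ∑ i, (ζ i - z i) ^ 2 := sq_sqrt (Finset.sum_nonneg fun i _ => sq_nonneg _)

theorem discrete_gaussian_fourier_decay_general
    (n : ℕ) (R : ℝ) (hR : 2 ≤ R) (ζ : Fin n → ℝ) :
    ‖ft (dgauss n R) ζ‖ ≤ Real.exp (-(R ^ 2 * tnorm ζ ^ 2) / 5) := by
  have hθ0 := periodizedGaussian_pos (c := π * R ^ 2) (by positivity) 0
  rw [ft_dgauss (by linarith), Complex.norm_real, norm_of_nonneg
    (Finset.prod_nonneg fun i _ => div_nonneg (periodizedGaussian_pos (by positivity) _).le hθ0.le)]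
  calc ∏ i, periodizedGaussian (π * R ^ 2) (ζ i) / periodizedGaussian (π * R ^ 2) 0
      ≤ ∏ i, rexp (-(R ^ 2 * (ζ i - round (ζ i)) ^ 2) / 5) :=
        Finset.prod_le_prod
          (fun i _ => div_nonneg (periodizedGaussian_pos (by positivity) _).le hθ0.le)
          fun i _ => (div_le_iff₀ hθ0).2 (periodizedGaussian_le_exp_sub_round hR (ζ i))
    _ = rexp (-(R ^ 2 * ∑ i, (ζ i - round (ζ i)) ^ 2) / 5) := by
        rw [← exp_sum, Finset.mul_sum, ← Finset.sum_neg_distrib, Finset.sum_div]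
    _ ≤ rexp (-(R ^ 2 * tnorm ζ ^ 2) / 5) := by
        gcongr
        exact sq_tnorm_le ζ fun i => round (ζ i)

/-- **Fourier decay of the discrete Gaussian** (Lemma 4.6): for every `n ≥ 1`,
`R ≥ 2` and every torus point `ζ ∈ 𝕋ⁿ`, `|γ̂_R(ζ)| ≤ exp(-R²‖ζ‖²_{𝕋ⁿ}/5)`. -/
theorem discrete_gaussian_fourier_decay
    (n : ℕ) (hn : 1 ≤ n) (R : ℝ) (hR : 2 ≤ R) (ζ : Fin n → ℝ) :
    ‖ft (dgauss n R) ζ‖ ≤ Real.exp (-(R ^ 2 * tnorm ζ ^ 2) / 5) :=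
  discrete_gaussian_fourier_decay_general n R hR ζ
end
end

section
/- (Coarse Rudin inequality) Let ν be a probability measure on ℤⁿ, let κ > 0, and let η ∈ [0,1] be such that |ν̂(ζ)| ≤ η whenever ‖ζ‖_{𝕋ⁿ} ≥ κ. Let T ⊆ 𝕋ⁿ be a finite κ-dissociated set and c : T → ℂ, and define F(x) := Re ∑_{ξ∈T} c(ξ)·exp(2πi⟨ξ,x⟩) for x ∈ ℤⁿ. Then for every σ ≥ 0, E_{x∼ν} exp(σ·F(x)) ≤ exp((σ²/2)·∑_{ξ∈T}|c(ξ)|²) + η·exp(σ·∑_{ξ∈T}|c(ξ)|). -/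
open scoped BigOperators

noncomputable section

/-- A finite set `T` of torus points (given by representatives) is `κ`-dissociated:
every nontrivial `{-1,0,1}`-combination of its elements has torus norm at least `κ`. -/
def Dissociated {n : ℕ} (κ : ℝ) (T : Finset (Fin n → ℝ)) : Prop :=
  ∀ ε : (Fin n → ℝ) → ℤ, (∀ ξ, ε ξ = -1 ∨ ε ξ = 0 ∨ ε ξ = 1) →
    (∃ ξ ∈ T, ε ξ ≠ 0) →
    κ ≤ tnorm (fun i => ∑ ξ ∈ T, (ε ξ : ℝ) * ξ i)

/-!
Rudin's Riesz-product argument. Convexity of `exp` gives `e^y ≤ cosh t + (sinh t / t) y` for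
`|y| ≤ t`, so `exp (Re ∑ a_ξ e(⟨ξ,x⟩))` is bounded pointwise by the Riesz product
`∏ (cosh |a_ξ| + (sinh |a_ξ| / |a_ξ|) Re (a_ξ e(⟨ξ,x⟩)))`. Expanding it gives a trigonometric
polynomial `∑_ε B_ε e(-⟨∑ ε_ξ ξ, x⟩)` over sign patterns `ε ∈ {-1,0,1}^T`, whose
`ν`-expectation is `∑_ε B_ε ν̂(∑ ε_ξ ξ)`. The term `ε = 0` is `∏ cosh |a_ξ| ≤ exp (½ ∑ |a_ξ|²)`;
by dissociation every other frequency has `|ν̂| ≤ η`, and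
`∑_ε |B_ε| = ∏ (cosh + sinh) |a_ξ| = exp ∑ |a_ξ|`. Take `a = σ c`.
-/

open Real Finset ComplexConjugate

theorem exp_le_cosh_add_sinh_div_mul {t y : ℝ} (hy : |y| ≤ t) :
    rexp y ≤ cosh t + sinh t / t * y := by
  obtain rfl | ht := ((abs_nonneg y).trans hy).eq_or_lt
  · simp [abs_nonpos_iff.mp hy]
  obtain ⟨hty, hyt⟩ := abs_le.mp hy
  -- `y` is the convex combination `(t + y)/(2t) • t + (t - y)/(2t) • (-t)`.
  have hchord := convexOn_exp.2 (Set.mem_univ t) (Set.mem_univ (-t))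
    (div_nonneg (by linarith : 0 ≤ t + y) (by linarith : 0 ≤ 2 * t))
    (div_nonneg (by linarith : 0 ≤ t - y) (by linarith : 0 ≤ 2 * t)) (by field_simp; ring)
  have hcomb : ((t + y) / (2 * t)) • t + ((t - y) / (2 * t)) • -t = y := by
    simp only [smul_eq_mul]; field_simp; ring
  have hrhs : ((t + y) / (2 * t)) • rexp t + ((t - y) / (2 * t)) • rexp (-t)
      = cosh t + sinh t / t * y := by
    simp only [smul_eq_mul, cosh_eq, sinh_eq]; field_simp; ring
  rwa [hcomb, hrhs] at hchord

theorem exp_sum_le_prod_cosh_add {ι : Type*} (s : Finset ι) {t y : ι → ℝ}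
    (hy : ∀ i ∈ s, |y i| ≤ t i) :
    rexp (∑ i ∈ s, y i) ≤ ∏ i ∈ s, (cosh (t i) + sinh (t i) / t i * y i) := by
  rw [Real.exp_sum]
  exact prod_le_prod (fun i _ => (exp_pos _).le) fun i hi => exp_le_cosh_add_sinh_div_mul (hy i hi)

/-- The Laurent coefficients in `u` of `cosh ‖a‖ + sinh ‖a‖ / ‖a‖ * re (a * u⁻¹)` for `‖u‖ = 1`. -/
def rieszCoeff (a : ℂ) (j : ℤ) : ℂ :=
  if j = 0 then (cosh ‖a‖ : ℂ)
  else if j = -1 then (sinh ‖a‖ / ‖a‖ / 2 : ℝ) * a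
  else (sinh ‖a‖ / ‖a‖ / 2 : ℝ) * conj a

@[simp] theorem rieszCoeff_zero (a : ℂ) : rieszCoeff a 0 = cosh ‖a‖ := rfl

@[simp] theorem rieszCoeff_neg_one (a : ℂ) :
    rieszCoeff a (-1) = (sinh ‖a‖ / ‖a‖ / 2 : ℝ) * a := rfl

@[simp] theorem rieszCoeff_one (a : ℂ) :
    rieszCoeff a 1 = (sinh ‖a‖ / ‖a‖ / 2 : ℝ) * conj a := rfl

theorem sum_neg_one_zero_one {M : Type*} [AddCommMonoid M] (f : ℤ → M) :
    ∑ j ∈ ({-1, 0, 1} : Finset ℤ), f j = f (-1) + f 0 + f 1 := by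
  rw [sum_insert (by decide), sum_insert (by decide), sum_singleton, add_assoc]

theorem ofReal_cosh_add_re_eq_sum (a : ℂ) {u : ℂ} (hu : ‖u‖ = 1) :
    ((cosh ‖a‖ + sinh ‖a‖ / ‖a‖ * (a * u⁻¹).re : ℝ) : ℂ)
      = ∑ j ∈ ({-1, 0, 1} : Finset ℤ), rieszCoeff a j * u ^ j := by
  have hre : (((a * u⁻¹).re : ℝ) : ℂ) = (a * u⁻¹ + conj a * u) / 2 := by
    rw [Complex.re_eq_add_conj, map_mul, map_inv₀, ← Complex.inv_eq_conj hu, inv_inv]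
  rw [sum_neg_one_zero_one, rieszCoeff_neg_one, rieszCoeff_zero, rieszCoeff_one,
    Complex.ofReal_add, Complex.ofReal_mul, hre, zpow_neg_one, zpow_zero, zpow_one]
  push_cast
  ring

theorem sum_norm_rieszCoeff (a : ℂ) :
    ∑ j ∈ ({-1, 0, 1} : Finset ℤ), ‖rieszCoeff a j‖ = rexp ‖a‖ := by
  have hsinh : sinh ‖a‖ / ‖a‖ * ‖a‖ = sinh ‖a‖ :=
    div_mul_cancel_of_imp fun h => by rw [h, sinh_zero]
  have hs : 0 ≤ sinh ‖a‖ / ‖a‖ / 2 := by positivity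
  rw [sum_neg_one_zero_one, rieszCoeff_neg_one, rieszCoeff_zero, rieszCoeff_one]
  simp only [norm_mul, Complex.norm_real, Complex.norm_conj, Real.norm_eq_abs, abs_of_nonneg hs,
    abs_of_nonneg (cosh_pos _).le]
  linear_combination hsinh + cosh_add_sinh ‖a‖

def signPatterns (ι : Type*) [Fintype ι] [DecidableEq ι] : Finset (ι → ℤ) :=
  Fintype.piFinset fun _ => {-1, 0, 1}

theorem mem_signPatterns {ι : Type*} [Fintype ι] [DecidableEq ι] {ε : ι → ℤ} :
    ε ∈ signPatterns ι ↔ ∀ i, ε i = -1 ∨ ε i = 0 ∨ ε i = 1 := by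
  simp [signPatterns]

section Fourier

variable {n : ℕ}

def ftKernel (ζ : Fin n → ℝ) (x : Fin n → ℤ) : ℂ :=
  Complex.exp (-(2 * (Real.pi : ℂ) * Complex.I) * (pair ζ x : ℂ))

theorem norm_ftKernel (ζ : Fin n → ℝ) (x : Fin n → ℤ) : ‖ftKernel ζ x‖ = 1 := by
  rw [ftKernel, Complex.norm_exp]
  simp

theorem ftKernel_inv (ζ : Fin n → ℝ) (x : Fin n → ℤ) :
    (ftKernel ζ x)⁻¹ = Complex.exp (2 * (Real.pi : ℂ) * Complex.I * (pair ζ x : ℂ)) := by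
  rw [ftKernel, ← Complex.exp_neg, neg_mul, neg_neg]

theorem pair_sum_smul {ι : Type*} (s : Finset ι) (r : ι → ℝ) (ξ : ι → Fin n → ℝ)
    (x : Fin n → ℤ) : pair (∑ i ∈ s, r i • ξ i) x = ∑ i ∈ s, r i * pair (ξ i) x := by
  simp only [pair, Finset.sum_apply, Pi.smul_apply, smul_eq_mul, sum_mul, mul_sum]
  rw [sum_comm]
  simp only [mul_assoc]

theorem prod_ftKernel_zpow {ι : Type*} (s : Finset ι) (ε : ι → ℤ) (ξ : ι → Fin n → ℝ)
    (x : Fin n → ℤ) :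
    ∏ i ∈ s, ftKernel (ξ i) x ^ ε i = ftKernel (∑ i ∈ s, (ε i : ℝ) • ξ i) x := by
  simp only [ftKernel, ← Complex.exp_int_mul, ← Complex.exp_sum, pair_sum_smul]
  push_cast
  congr 1
  rw [mul_sum]
  exact sum_congr rfl fun i _ => by ring

theorem hasSum_ft {ν : (Fin n → ℤ) → ℝ} (hν : Summable ν) (ζ : Fin n → ℝ) :
    HasSum (fun x => (ν x : ℂ) * ftKernel ζ x) (ft ν ζ) := by
  refine (Summable.of_norm ?_).hasSum
  simpa [norm_ftKernel] using summable_abs_iff.mpr hν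

theorem ft_zero_s2 {ν : (Fin n → ℤ) → ℝ} (hν : IsPMF ν) : ft ν 0 = 1 := by
  simp [ft, pair, ← Complex.ofReal_tsum, hν.2.tsum_eq]

theorem re_sum_mul_ft_le {α : Type*} [DecidableEq α] {s : Finset α}
    {ν : (Fin n → ℤ) → ℝ} (hν : IsPMF ν) {η : ℝ} (hη : 0 ≤ η) (B : α → ℂ) {ζ : α → Fin n → ℝ}
    {a₀ : α} (ha₀ : a₀ ∈ s) (hζ₀ : ζ a₀ = 0) (hζ : ∀ a ∈ s, a ≠ a₀ → ‖ft ν (ζ a)‖ ≤ η) :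
    (∑ a ∈ s, B a * ft ν (ζ a)).re ≤ (B a₀).re + η * ∑ a ∈ s, ‖B a‖ := by
  rw [← add_sum_erase s _ ha₀, hζ₀, ft_zero_s2 hν, mul_one, Complex.add_re]
  refine add_le_add_right ?_ _
  calc (∑ a ∈ s.erase a₀, B a * ft ν (ζ a)).re
      ≤ ‖∑ a ∈ s.erase a₀, B a * ft ν (ζ a)‖ := Complex.re_le_norm _
    _ ≤ ∑ a ∈ s.erase a₀, ‖B a‖ * η := norm_sum_le_of_le _ fun a ha => by
        rw [norm_mul]
        exact mul_le_mul_of_nonneg_left (hζ a (mem_of_mem_erase ha) (ne_of_mem_erase ha))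
          (norm_nonneg _)
    _ ≤ ∑ a ∈ s, ‖B a‖ * η :=
        sum_le_sum_of_subset_of_nonneg (erase_subset _ _) fun _ _ _ => by positivity
    _ = η * ∑ a ∈ s, ‖B a‖ := by rw [← sum_mul, mul_comm]

variable {ι : Type*} [Fintype ι]

-- At `a i = 0` the junk value `sinh 0 / 0 = 0` still gives the right factor `1`.
def rieszProduct (a : ι → ℂ) (ξ : ι → Fin n → ℝ) (x : Fin n → ℤ) : ℝ :=
  ∏ i, (cosh ‖a i‖ + sinh ‖a i‖ / ‖a i‖ * (a i * (ftKernel (ξ i) x)⁻¹).re)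

theorem exp_re_sum_le_rieszProduct (a : ι → ℂ) (ξ : ι → Fin n → ℝ) (x : Fin n → ℤ) :
    rexp (∑ i, a i * (ftKernel (ξ i) x)⁻¹).re ≤ rieszProduct a ξ x := by
  rw [Complex.re_sum]
  refine exp_sum_le_prod_cosh_add _ fun i _ => ?_
  simpa [norm_ftKernel] using Complex.abs_re_le_norm (a i * (ftKernel (ξ i) x)⁻¹)

theorem ofReal_rieszProduct_eq_sum [DecidableEq ι] (a : ι → ℂ) (ξ : ι → Fin n → ℝ)
    (x : Fin n → ℤ) :
    (rieszProduct a ξ x : ℂ) = ∑ ε ∈ signPatterns ι,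
      (∏ i, rieszCoeff (a i) (ε i)) * ftKernel (∑ i, (ε i : ℝ) • ξ i) x := by
  simp only [rieszProduct, Complex.ofReal_prod, ofReal_cosh_add_re_eq_sum _ (norm_ftKernel _ _),
    prod_univ_sum, signPatterns, prod_mul_distrib, prod_ftKernel_zpow]

theorem hasSum_mul_rieszProduct [DecidableEq ι] {ν : (Fin n → ℤ) → ℝ} (hν : Summable ν)
    (a : ι → ℂ) (ξ : ι → Fin n → ℝ) :
    HasSum (fun x => ν x * rieszProduct a ξ x) (∑ ε ∈ signPatterns ι,
      (∏ i, rieszCoeff (a i) (ε i)) * ft ν (∑ i, (ε i : ℝ) • ξ i)).re := by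
  have hterms := hasSum_sum (s := signPatterns ι) fun ε _ =>
    (hasSum_ft hν (∑ i, (ε i : ℝ) • ξ i)).mul_left (∏ i, rieszCoeff (a i) (ε i))
  convert Complex.hasSum_re hterms using 1
  ext x
  rw [← Complex.ofReal_re (ν x * _), Complex.ofReal_mul, ofReal_rieszProduct_eq_sum, mul_sum]
  simp only [mul_left_comm]

theorem tsum_mul_exp_re_sum_le [DecidableEq ι] {ν : (Fin n → ℤ) → ℝ} (hν : IsPMF ν) {η : ℝ}
    (hη : 0 ≤ η) (ξ : ι → Fin n → ℝ) (a : ι → ℂ)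
    (hspec : ∀ ε ∈ signPatterns ι, ε ≠ 0 → ‖ft ν (∑ i, (ε i : ℝ) • ξ i)‖ ≤ η) :
    ∑' x, ν x * rexp (∑ i, a i * (ftKernel (ξ i) x)⁻¹).re
      ≤ rexp (∑ i, ‖a i‖ ^ 2 / 2) + η * rexp (∑ i, ‖a i‖) := by
  have hR := hasSum_mul_rieszProduct hν.2.summable a ξ
  have hle : ∀ x, ν x * rexp (∑ i, a i * (ftKernel (ξ i) x)⁻¹).re ≤ ν x * rieszProduct a ξ x :=
    fun x => mul_le_mul_of_nonneg_left (exp_re_sum_le_rieszProduct a ξ x) (hν.1 x)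
  have hsumm : Summable fun x => ν x * rexp (∑ i, a i * (ftKernel (ξ i) x)⁻¹).re :=
    hR.summable.of_nonneg_of_le (fun x => mul_nonneg (hν.1 x) (exp_pos _).le) hle
  have h0 : (0 : ι → ℤ) ∈ signPatterns ι := mem_signPatterns.2 fun _ => by simp
  calc ∑' x, ν x * rexp (∑ i, a i * (ftKernel (ξ i) x)⁻¹).re
      ≤ (∑ ε ∈ signPatterns ι,
          (∏ i, rieszCoeff (a i) (ε i)) * ft ν (∑ i, (ε i : ℝ) • ξ i)).re :=
        hasSum_le hle hsumm.hasSum hR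
    _ ≤ (∏ i, rieszCoeff (a i) 0).re
          + η * ∑ ε ∈ signPatterns ι, ‖∏ i, rieszCoeff (a i) (ε i)‖ :=
        re_sum_mul_ft_le hν hη _ h0 (by simp) hspec
    _ = ∏ i, cosh ‖a i‖ + η * ∏ i, rexp ‖a i‖ := by
        simp only [rieszCoeff_zero, ← Complex.ofReal_prod, Complex.ofReal_re, norm_prod,
          signPatterns]
        rw [sum_prod_piFinset _ fun i j => ‖rieszCoeff (a i) j‖]
        simp only [sum_norm_rieszCoeff]
    _ ≤ rexp (∑ i, ‖a i‖ ^ 2 / 2) + η * rexp (∑ i, ‖a i‖) := by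
        rw [Real.exp_sum, Real.exp_sum]
        gcongr with i
        exact cosh_le_exp_half_sq _

theorem Dissociated.norm_ft_le {κ η : ℝ} {T : Finset (Fin n → ℝ)} (hT : Dissociated κ T)
    {ν : (Fin n → ℤ) → ℝ} (hspec : ∀ ζ : Fin n → ℝ, κ ≤ tnorm ζ → ‖ft ν ζ‖ ≤ η) :
    ∀ ε ∈ signPatterns T, ε ≠ 0 → ‖ft ν (∑ ξ : T, (ε ξ : ℝ) • (ξ : Fin n → ℝ))‖ ≤ η := by
  intro ε hε hε0
  set ε' : (Fin n → ℝ) → ℤ := fun ξ => if h : ξ ∈ T then ε ⟨ξ, h⟩ else 0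
  have hε' : ∀ ξ : T, ε' ξ = ε ξ := fun ξ => dif_pos ξ.2
  apply hspec
  convert hT ε' (fun ξ => ?_) ?_ using 2
  · ext k
    rw [← sum_coe_sort T]
    simp [hε']
  · by_cases h : ξ ∈ T
    · simpa [ε', h] using mem_signPatterns.1 hε ⟨ξ, h⟩
    · simp [ε', h]
  · obtain ⟨ξ, hξ⟩ := Function.ne_iff.1 hε0
    exact ⟨ξ, ξ.2, by simpa [hε'] using hξ⟩

end Fourier

theorem coarse_rudin_general
    (n : ℕ) (ν : (Fin n → ℤ) → ℝ) (hν : IsPMF ν)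
    (κ : ℝ) (η : ℝ) (hη : η ∈ Set.Icc (0:ℝ) 1)
    (hspec : ∀ ζ : Fin n → ℝ, κ ≤ tnorm ζ → ‖ft ν ζ‖ ≤ η)
    (T : Finset (Fin n → ℝ)) (hT : Dissociated κ T)
    (c : (Fin n → ℝ) → ℂ) (σ : ℝ) (hσ : 0 ≤ σ) :
    (∑' x : Fin n → ℤ, ν x *
        Real.exp (σ * (∑ ξ ∈ T,
          c ξ * Complex.exp ((2 * (Real.pi : ℂ) * Complex.I) * (pair ξ x : ℂ))).re))
      ≤ Real.exp (σ ^ 2 / 2 * ∑ ξ ∈ T, ‖c ξ‖ ^ 2)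
        + η * Real.exp (σ * ∑ ξ ∈ T, ‖c ξ‖) := by
  have hnorm : ∀ ξ, ‖(σ : ℂ) * c ξ‖ = σ * ‖c ξ‖ := fun ξ => by
    rw [norm_mul, Complex.norm_real, Real.norm_eq_abs, abs_of_nonneg hσ]
  have h := tsum_mul_exp_re_sum_le hν hη.1 (fun ξ : T => (ξ : Fin n → ℝ)) (fun ξ => σ * c ξ)
    (hT.norm_ft_le hspec)
  convert h using 4 with x
  · rw [← Complex.re_ofReal_mul, mul_sum, ← sum_coe_sort T]
    simp only [ftKernel_inv, mul_assoc]
  · simp only [hnorm, mul_pow, ← sum_div, ← mul_sum, sum_coe_sort T (fun ξ => ‖c ξ‖ ^ 2)]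
    ring
  · simp only [hnorm, ← mul_sum, sum_coe_sort T (fun ξ => ‖c ξ‖)]

/-- **Coarse Rudin inequality** (Lemma 4.7). -/
theorem coarse_rudin
    (n : ℕ) (ν : (Fin n → ℤ) → ℝ) (hν : IsPMF ν)
    (κ : ℝ) (hκ : 0 < κ) (η : ℝ) (hη : η ∈ Set.Icc (0:ℝ) 1)
    (hspec : ∀ ζ : Fin n → ℝ, κ ≤ tnorm ζ → ‖ft ν ζ‖ ≤ η)
    (T : Finset (Fin n → ℝ)) (hT : Dissociated κ T)
    (c : (Fin n → ℝ) → ℂ) (σ : ℝ) (hσ : 0 ≤ σ) :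
    (∑' x : Fin n → ℤ, ν x *
        Real.exp (σ * (∑ ξ ∈ T,
          c ξ * Complex.exp ((2 * (Real.pi : ℂ) * Complex.I) * (pair ξ x : ℂ))).re))
      ≤ Real.exp (σ ^ 2 / 2 * ∑ ξ ∈ T, ‖c ξ‖ ^ 2)
        + η * Real.exp (σ * ∑ ξ ∈ T, ‖c ξ‖) :=
  coarse_rudin_general n ν hν κ η hη hspec T hT c σ hσ
end
end

section
/- Let μ be a probability measure on ℤⁿ, let ξ₁,…,ξ_d ∈ 𝕋ⁿ and θ₁,…,θ_d ∈ ℝ/ℤ, and assume there exist κ₁,…,κ_d ∈ [0,1] such that E_{x∼μ} cos(2π(⟨ξ_j,x⟩ − θ_j)) ≥ 1 − κ_j for every 1 ≤ j ≤ d. Then for every ε₁,…,ε_d ∈ {−1,0,1}, writing T := {j ∈ [d] : ε_j ≠ 0}, m := |T|, ξ := ∑_{j=1}^d ε_jξ_j and θ := ∑_{j=1}^d ε_jθ_j, one has E_{x∼μ} cos(2π(⟨ξ,x⟩ − θ)) ≥ 1 − m·∑_{j∈T} κ_j. -/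
open scoped BigOperators

noncomputable section

/-!
Since `1 - cos a = 2 sin² (a / 2)` and `|sin (x + y)| ≤ |sin x| + |sin y|`, Cauchy–Schwarz gives
the pointwise bound `1 - cos (∑_{j ∈ T} aⱼ) ≤ |T| ∑_{j ∈ T} (1 - cos aⱼ)`. Averaging it over `μ`
gives the same inequality between the defects `1 - 𝔼 cos`, and the signs `εⱼ = ±1` do not change
a defect because cosine is even.
-/

open Finset Real

namespace Real

theorem one_sub_cos_eq_two_mul_sin_sq (a : ℝ) : 1 - cos a = 2 * sin (a / 2) ^ 2 := by
  have h := cos_sq (a / 2)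
  rw [mul_div_cancel₀ a two_ne_zero] at h
  nlinarith [sin_sq_add_cos_sq (a / 2)]

theorem abs_sin_add_le (x y : ℝ) : |sin (x + y)| ≤ |sin x| + |sin y| := by
  rw [sin_add]
  calc |sin x * cos y + cos x * sin y| ≤ |sin x * cos y| + |cos x * sin y| := abs_add_le _ _
    _ ≤ |sin x| + |sin y| := by
      rw [abs_mul, abs_mul]
      gcongr
      · exact mul_le_of_le_one_right (abs_nonneg _) (abs_cos_le_one y)
      · exact mul_le_of_le_one_left (abs_nonneg _) (abs_cos_le_one x)

theorem abs_sin_sum_le {ι : Type*} (s : Finset ι) (a : ι → ℝ) :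
    |sin (∑ j ∈ s, a j)| ≤ ∑ j ∈ s, |sin (a j)| := by
  classical
  induction s using Finset.induction_on with
  | empty => simp
  | insert j s hj ih =>
    rw [sum_insert hj, sum_insert hj]
    exact (abs_sin_add_le _ _).trans (add_le_add le_rfl ih)

theorem one_sub_cos_sum_le {ι : Type*} (s : Finset ι) (a : ι → ℝ) :
    1 - cos (∑ j ∈ s, a j) ≤ #s * ∑ j ∈ s, (1 - cos (a j)) :=
  calc 1 - cos (∑ j ∈ s, a j) = 2 * |sin (∑ j ∈ s, a j / 2)| ^ 2 := by
        rw [one_sub_cos_eq_two_mul_sin_sq, sq_abs, sum_div]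
    _ ≤ 2 * (∑ j ∈ s, |sin (a j / 2)|) ^ 2 := by
        gcongr
        exact abs_sin_sum_le s _
    _ ≤ 2 * (#s * ∑ j ∈ s, |sin (a j / 2)| ^ 2) := by
        gcongr
        exact sq_sum_le_card_mul_sum_sq
    _ = #s * ∑ j ∈ s, (1 - cos (a j)) := by
        simp_rw [one_sub_cos_eq_two_mul_sin_sq, sq_abs, ← mul_sum]
        ring

theorem cos_intCast_mul_of_eq_neg_one_or_eq_one {e : ℤ} (he : e = -1 ∨ e = 1) (a : ℝ) :
    cos (e * a) = cos a := by
  rcases he with rfl | rfl <;> simp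

end Real

section CosDefect

variable {α : Type*} {μ : α → ℝ}

def cosDefect (μ φ : α → ℝ) : ℝ := ∑' x, μ x * (1 - cos (φ x))

theorem summable_mul_one_sub_cos (hμ0 : ∀ x, 0 ≤ μ x) (hμ : Summable μ) (φ : α → ℝ) :
    Summable fun x => μ x * (1 - cos (φ x)) :=
  (hμ.mul_right 2).of_nonneg_of_le
    (fun x => mul_nonneg (hμ0 x) (by linarith [cos_le_one (φ x)]))
    (fun x => mul_le_mul_of_nonneg_left (by linarith [neg_one_le_cos (φ x)]) (hμ0 x))

theorem cosDefect_eq (hμ0 : ∀ x, 0 ≤ μ x) (hμ : HasSum μ 1) (φ : α → ℝ) :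
    cosDefect μ φ = 1 - ∑' x, μ x * cos (φ x) := by
  have hcos : Summable fun x => μ x * cos (φ x) :=
    (hμ.summable.sub (summable_mul_one_sub_cos hμ0 hμ.summable φ)).congr fun x => by ring
  simp_rw [cosDefect, mul_one_sub]
  rw [hμ.summable.tsum_sub hcos, hμ.tsum_eq]

theorem cosDefect_sum_le (hμ0 : ∀ x, 0 ≤ μ x) (hμ : Summable μ) {ι : Type*} (s : Finset ι)
    (φ : ι → α → ℝ) :
    cosDefect μ (fun x => ∑ j ∈ s, φ j x) ≤ #s * ∑ j ∈ s, cosDefect μ (φ j) := by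
  have hs := fun j (_ : j ∈ s) => summable_mul_one_sub_cos hμ0 hμ (φ j)
  calc cosDefect μ (fun x => ∑ j ∈ s, φ j x)
      ≤ ∑' x, #s * ∑ j ∈ s, μ x * (1 - cos (φ j x)) := by
        refine (summable_mul_one_sub_cos hμ0 hμ _).tsum_le_tsum (fun x => ?_)
          ((summable_sum hs).mul_left _)
        rw [← mul_sum, mul_left_comm]
        exact mul_le_mul_of_nonneg_left (one_sub_cos_sum_le s _) (hμ0 x)
    _ = #s * ∑ j ∈ s, cosDefect μ (φ j) := by
        rw [tsum_mul_left, Summable.tsum_finsetSum hs]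
        rfl

end CosDefect

theorem pair_sum_mul {n : ℕ} {ι : Type*} [Fintype ι] (c : ι → ℝ) (ξ : ι → Fin n → ℝ)
    (x : Fin n → ℤ) : pair (fun i => ∑ j, c j * ξ j i) x = ∑ j, c j * pair (ξ j) x := by
  simp only [pair, sum_mul, mul_sum, mul_assoc]
  exact sum_comm

theorem signed_sum_phase_general
    (n d : ℕ) (μ : (Fin n → ℤ) → ℝ) (hμ : IsPMF μ)
    (ξ : Fin d → Fin n → ℝ) (θ : Fin d → ℝ) (κ : Fin d → ℝ)
    (hphase : ∀ j, 1 - κ j ≤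
      ∑' x : Fin n → ℤ, μ x * Real.cos (2 * Real.pi * (pair (ξ j) x - θ j)))
    (ε : Fin d → ℤ) (hε : ∀ j, ε j = -1 ∨ ε j = 0 ∨ ε j = 1) :
    1 - ((Finset.univ.filter (fun j : Fin d => ε j ≠ 0)).card : ℝ) *
        (∑ j ∈ Finset.univ.filter (fun j : Fin d => ε j ≠ 0), κ j)
      ≤ ∑' x : Fin n → ℤ, μ x *
          Real.cos (2 * Real.pi *
            (pair (fun i => ∑ j, (ε j : ℝ) * ξ j i) x - ∑ j, (ε j : ℝ) * θ j)) := by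
  obtain ⟨hμ0, hμ1⟩ := hμ
  set T := univ.filter fun j : Fin d => ε j ≠ 0
  let φ : Fin d → (Fin n → ℤ) → ℝ := fun j x => ε j * (2 * π * (pair (ξ j) x - θ j))
  have hsum : ∀ x, 2 * π * (pair (fun i => ∑ j, (ε j : ℝ) * ξ j i) x - ∑ j, (ε j : ℝ) * θ j)
      = ∑ j ∈ T, φ j x := fun x => by
    rw [sum_filter_of_ne fun j _ h => by simpa [φ] using left_ne_zero_of_mul h, pair_sum_mul,
      ← sum_sub_distrib, mul_sum]
    exact sum_congr rfl fun j _ => by ring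
  have hdefect : ∀ j ∈ T, cosDefect μ (φ j) ≤ κ j := fun j hj => by
    have hsign : ε j = -1 ∨ ε j = 1 := by grind
    simp only [φ, cosDefect_eq hμ0 hμ1, cos_intCast_mul_of_eq_neg_one_or_eq_one hsign]
    linarith [hphase j]
  have hT := cosDefect_sum_le hμ0 hμ1.summable T φ
  rw [cosDefect_eq hμ0 hμ1] at hT
  simp_rw [hsum]
  linarith [mul_le_mul_of_nonneg_left (sum_le_sum hdefect) (Nat.cast_nonneg (α := ℝ) #T)]

/-- **Signed sums of phases** (Fact 4.9): if each `⟨ξⱼ,·⟩` is concentrated around the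
phase `θⱼ` up to defect `κⱼ`, then any `{-1,0,1}`-signed combination `ξ = ∑ εⱼξⱼ`
is concentrated around `θ = ∑ εⱼθⱼ` with defect at most `m·∑_{j∈T} κⱼ`,
where `T = {j : εⱼ ≠ 0}` and `m = |T|`. -/
theorem signed_sum_phase
    (n d : ℕ) (μ : (Fin n → ℤ) → ℝ) (hμ : IsPMF μ)
    (ξ : Fin d → Fin n → ℝ) (θ : Fin d → ℝ) (κ : Fin d → ℝ)
    (hκ : ∀ j, κ j ∈ Set.Icc (0:ℝ) 1)
    (hphase : ∀ j, 1 - κ j ≤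
      ∑' x : Fin n → ℤ, μ x * Real.cos (2 * Real.pi * (pair (ξ j) x - θ j)))
    (ε : Fin d → ℤ) (hε : ∀ j, ε j = -1 ∨ ε j = 0 ∨ ε j = 1) :
    1 - ((Finset.univ.filter (fun j : Fin d => ε j ≠ 0)).card : ℝ) *
        (∑ j ∈ Finset.univ.filter (fun j : Fin d => ε j ≠ 0), κ j)
      ≤ ∑' x : Fin n → ℤ, μ x *
          Real.cos (2 * Real.pi *
            (pair (fun i => ∑ j, (ε j : ℝ) * ξ j i) x - ∑ j, (ε j : ℝ) * θ j)) :=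
  signed_sum_phase_general n d μ hμ ξ θ κ hphase ε hε
end
end

section
/- Let n ≥ 1 and R ≥ √((2/π)·ln(8n)), and let Γ_R := γ_R ∗ γ_R be the convolution of the discrete Gaussian γ_R on ℤⁿ with itself. Then Γ_R(x) ≤ 4·γ_{√2·R}(x) for every x ∈ ℤⁿ; equivalently, Γ_R is a (1/4)-dense piece of γ_{√2·R}. -/
open scoped BigOperators

noncomputable section

/-- Convolution of two mass functions on `ℤⁿ`. -/
def conv {n : ℕ} (μ ν : (Fin n → ℤ) → ℝ) (x : Fin n → ℤ) : ℝ :=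
  ∑' y : Fin n → ℤ, μ y * ν (x - y)

/-! ### Auxiliary development -/

section AuxGauss

open Real

lemma aux_summable_gauss {c : ℝ} (hc : 0 < c) (d : ℝ) :
    Summable fun k : ℤ => Real.exp (-c * ((k : ℝ) + d) ^ 2) := by
  have h := (summable_pow_mul_jacobiTheta₂_term_bound (c * |d| / π) (show 0 < c/π by positivity)
    0).mul_left (Real.exp (-c * d ^ 2))
  refine Summable.of_nonneg_of_le (fun k => (Real.exp_pos _).le) (fun k => ?_) h
  have hπ : (0:ℝ) < π := pi_pos
  have h1 : -c * ((k : ℝ) + d) ^ 2 ≤ -c * d ^ 2 + (-π * (c/π * (k:ℝ) ^ 2 - 2 * (c * |d| / π) * |(k:ℝ)|)) := by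
    have h2 : -((k:ℝ) * d) ≤ |(k:ℝ)| * |d| := by
      rw [← abs_mul]; exact neg_le_abs _
    have h3 : -π * (c/π * (k:ℝ) ^ 2 - 2 * (c * |d| / π) * |(k:ℝ)|)
        = -c * (k:ℝ)^2 + 2 * c * (|(k:ℝ)| * |d|) := by field_simp; ring
    rw [h3]; nlinarith [hc.le]
  calc Real.exp (-c * ((k : ℝ) + d) ^ 2) ≤ Real.exp (-c * d ^ 2 +
        (-π * (c/π * (k:ℝ) ^ 2 - 2 * (c * |d| / π) * |(k:ℝ)|))) := Real.exp_le_exp.mpr h1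
    _ = Real.exp (-c * d ^ 2) * (|(k:ℤ)| ^ 0 * Real.exp (-π * (c/π * (k:ℤ) ^ 2 - 2 * (c * |d| / π) * |(k:ℤ)|))) := by
        rw [Real.exp_add]; push_cast; ring

lemma aux_summable_gauss' {c : ℝ} (hc : 0 < c) (d : ℝ) :
    Summable fun k : ℤ => Real.exp (-c * ((k : ℝ) - d) ^ 2) := by
  simpa [sub_eq_add_neg] using aux_summable_gauss hc (-d)

/-- theta function -/
def th (b : ℝ) : ℝ := ∑' k : ℤ, Real.exp (-b * (k : ℝ) ^ 2)

/-- half-shifted theta -/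
def thh (b : ℝ) : ℝ := ∑' k : ℤ, Real.exp (-b * ((k : ℝ) + 1/2) ^ 2)

lemma summable_th {b : ℝ} (hb : 0 < b) : Summable fun k : ℤ => Real.exp (-b * (k : ℝ) ^ 2) := by
  simpa using aux_summable_gauss hb 0

lemma th_ge_one {b : ℝ} (hb : 0 < b) : 1 ≤ th b := by
  have h := Summable.le_tsum (summable_th hb) 0 (fun j _ => (Real.exp_pos _).le)
  simpa [th, neg_mul] using h

lemma th_pos {b : ℝ} (hb : 0 < b) : 0 < th b := lt_of_lt_of_le one_pos (th_ge_one hb)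

lemma th_nonneg {b : ℝ} : 0 ≤ th b := tsum_nonneg fun _ => (Real.exp_pos _).le

lemma thh_nonneg {b : ℝ} : 0 ≤ thh b := tsum_nonneg fun _ => (Real.exp_pos _).le

lemma th_anti {b b' : ℝ} (hb : 0 < b) (hbb : b ≤ b') : th b' ≤ th b := by
  refine Summable.tsum_le_tsum (fun k => ?_) (summable_th (lt_of_lt_of_le hb hbb)) (summable_th hb)
  apply Real.exp_le_exp.mpr
  nlinarith [sq_nonneg (k:ℝ)]

lemma hasSum_geom_int {r : ℝ} (hr : 0 ≤ r) (hr1 : r < 1) :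
    HasSum (fun k : ℤ => r ^ k.natAbs) ((1 + r) / (1 - r)) := by
  have h1 : HasSum (fun n : ℕ => r ^ ((n : ℤ)).natAbs) (1 - r)⁻¹ := by
    simpa using hasSum_geometric_of_lt_one hr hr1
  have h2 : HasSum (fun n : ℕ => r ^ (-((n : ℤ) + 1)).natAbs) (r * (1 - r)⁻¹) := by
    have h := (hasSum_geometric_of_lt_one hr hr1).mul_left r
    refine HasSum.congr_fun h fun n => ?_
    have hn : (-((n : ℤ) + 1)).natAbs = n + 1 := by omega
    rw [hn, pow_succ]; ring
  have h3 := (HasSum.of_nat_of_neg_add_one h1 h2 : HasSum (fun k : ℤ => r ^ k.natAbs) _)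
  have he : (1 - r)⁻¹ + r * (1 - r)⁻¹ = (1 + r) / (1 - r) := by
    field_simp
  rwa [he] at h3

lemma natAbs_le_sq (k : ℤ) : ((k.natAbs : ℝ)) ≤ (k : ℝ) ^ 2 := by
  have h1 : ((k.natAbs : ℝ)) ≤ ((k.natAbs : ℝ)) ^ 2 := by
    exact_mod_cast Nat.le_self_pow two_ne_zero k.natAbs
  have h2 : ((k.natAbs : ℝ)) ^ 2 = (k : ℝ) ^ 2 := by
    have h : ((k.natAbs : ℝ)) = |(k : ℝ)| := by
      rw [Nat.cast_natAbs]; push_cast; ring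
    rw [h, sq_abs]
  linarith [h2 ▸ h1]

lemma th_le {b : ℝ} (hb : 0 < b) : th b ≤ (1 + Real.exp (-b)) / (1 - Real.exp (-b)) := by
  have hr : (0:ℝ) ≤ Real.exp (-b) := (Real.exp_pos _).le
  have hr1 : Real.exp (-b) < 1 := Real.exp_lt_one_iff.mpr (by linarith)
  refine le_of_le_of_eq (Summable.tsum_le_tsum (fun k => ?_) (summable_th hb)
    (hasSum_geom_int hr hr1).summable) (hasSum_geom_int hr hr1).tsum_eq
  have h : Real.exp (-b) ^ k.natAbs = Real.exp (-b * k.natAbs) := by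
    rw [← Real.exp_nat_mul]; ring_nf
  rw [h]
  apply Real.exp_le_exp.mpr
  nlinarith [natAbs_le_sq k, hb.le]

lemma sqrt_aux {b : ℝ} (hb : 0 < b) : (1:ℝ) / (b / π) ^ ((1:ℝ)/2) = Real.sqrt (π / b) := by
  rw [← Real.sqrt_eq_rpow, one_div, ← Real.sqrt_inv]
  congr 1
  field_simp

lemma th_poisson {b : ℝ} (hb : 0 < b) : th b = Real.sqrt (π / b) * th (π ^ 2 / b) := by
  have hπ := pi_pos
  have ha : 0 < b / π := by positivity
  have h := Real.tsum_exp_neg_mul_int_sq ha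
  have e1 : ∀ k : ℤ, -π * (b / π) * (k:ℝ) ^ 2 = -b * (k:ℝ) ^ 2 := by
    intro k; field_simp
  have e2 : ∀ k : ℤ, -π / (b / π) * (k:ℝ) ^ 2 = -(π ^ 2 / b) * (k:ℝ) ^ 2 := by
    intro k; rw [neg_div, div_div_eq_mul_div]; ring
  simp_rw [e1, e2] at h
  rw [th, th, h, sqrt_aux hb]

lemma thh_poisson {b : ℝ} (hb : 0 < b) :
    thh b = Real.sqrt (π / b) * ∑' k : ℤ, ((-1:ℝ) ^ k * Real.exp (-(π ^ 2 / b) * (k : ℝ) ^ 2)) := by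
  have hπ : (0:ℝ) < π := pi_pos
  have hπ' : (π:ℂ) ≠ 0 := by exact_mod_cast hπ.ne'
  have hbne : (b:ℂ) ≠ 0 := by exact_mod_cast hb.ne'
  have ha : 0 < ((b / π : ℝ) : ℂ).re := by simpa using div_pos hb hπ
  have key := Complex.tsum_exp_neg_quadratic ha ((-(b / (2 * π)) : ℝ) : ℂ)
  have hb4 : Complex.exp ((b:ℂ)/4) ≠ 0 := Complex.exp_ne_zero _
  have e1 : ∀ k : ℤ, (-(π:ℂ) * ((b/π : ℝ):ℂ) * (k:ℂ)^2 + 2*(π:ℂ)*((-(b/(2*π)) : ℝ):ℂ)*(k:ℂ))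
      = (b:ℂ)/4 + -(b:ℂ)*((k:ℂ)+1/2)^2 := by
    intro k; push_cast; field_simp; ring
  have e2 : ∀ k : ℤ, (-(π:ℂ)/((b/π : ℝ):ℂ) * ((k:ℂ) + Complex.I * ((-(b/(2*π)) : ℝ):ℂ))^2)
      = (b:ℂ)/4 + ((k:ℂ)*((π:ℂ)*Complex.I) + -((π:ℂ)^2/(b:ℂ))*(k:ℂ)^2) := by
    intro k; push_cast; field_simp; ring_nf
    rw [Complex.I_sq]; ring
  have L : (∑' k:ℤ, Complex.exp (-(π:ℂ) * ((b/π : ℝ):ℂ) * (k:ℂ)^2 + 2*(π:ℂ)*((-(b/(2*π)) : ℝ):ℂ)*(k:ℂ)))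
      = Complex.exp ((b:ℂ)/4) * ∑' k:ℤ, Complex.exp (-(b:ℂ)*((k:ℂ)+1/2)^2) := by
    rw [← tsum_mul_left]
    exact tsum_congr fun k => by rw [e1 k, Complex.exp_add]
  have Rr : (∑' k:ℤ, Complex.exp (-(π:ℂ)/((b/π : ℝ):ℂ) * ((k:ℂ) + Complex.I * ((-(b/(2*π)) : ℝ):ℂ))^2))
      = Complex.exp ((b:ℂ)/4) * ∑' k:ℤ, ((-1:ℂ)^k * Complex.exp (-((π:ℂ)^2/(b:ℂ))*(k:ℂ)^2)) := by
    rw [← tsum_mul_left]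
    refine tsum_congr fun k => ?_
    rw [e2 k, Complex.exp_add, Complex.exp_add, Complex.exp_int_mul, Complex.exp_pi_mul_I]
  rw [L, Rr] at key
  have key2 : (∑' k:ℤ, Complex.exp (-(b:ℂ)*((k:ℂ)+1/2)^2))
      = (1 / ((b/π : ℝ):ℂ) ^ ((1:ℂ)/2)) * ∑' k:ℤ, ((-1:ℂ)^k * Complex.exp (-((π:ℂ)^2/(b:ℂ))*(k:ℂ)^2)) := by
    apply mul_left_cancel₀ hb4
    rw [key]; ring
  have c1 : (1 / ((b/π : ℝ):ℂ) ^ ((1:ℂ)/2)) = ((Real.sqrt (π/b) : ℝ) : ℂ) := by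
    rw [← sqrt_aux hb]
    rw [show ((1:ℂ)/2) = (((1:ℝ)/2 : ℝ) : ℂ) by push_cast; ring]
    rw [← Complex.ofReal_cpow (by positivity)]
    push_cast
    ring
  have cA : ((thh b : ℝ):ℂ) = ∑' k:ℤ, Complex.exp (-(b:ℂ)*((k:ℂ)+1/2)^2) := by
    rw [thh, Complex.ofReal_tsum]
    refine tsum_congr fun k => ?_
    rw [Complex.ofReal_exp]
    congr 1
    push_cast
    ring
  have cB : ((∑' k : ℤ, ((-1:ℝ) ^ k * Real.exp (-(π ^ 2 / b) * (k : ℝ) ^ 2)) : ℝ) : ℂ)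
      = ∑' k:ℤ, ((-1:ℂ)^k * Complex.exp (-((π:ℂ)^2/(b:ℂ))*(k:ℂ)^2)) := by
    rw [Complex.ofReal_tsum]
    refine tsum_congr fun k => ?_
    rw [Complex.ofReal_mul, Complex.ofReal_exp]
    congr 1
    · push_cast; ring
    · congr 1; push_cast; ring
  have hfin : ((thh b : ℝ):ℂ) = ((Real.sqrt (π/b) : ℝ) : ℂ) * ((∑' k : ℤ, ((-1:ℝ) ^ k * Real.exp (-(π ^ 2 / b) * (k : ℝ) ^ 2)) : ℝ) : ℂ) := by
    rw [cA, cB, key2, c1]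
  exact_mod_cast hfin

lemma summable_alt {b : ℝ} (hb : 0 < b) :
    Summable fun k : ℤ => ((-1:ℝ) ^ k * Real.exp (-(π ^ 2 / b) * (k : ℝ) ^ 2)) := by
  have hc : 0 < π ^ 2 / b := by positivity
  apply Summable.of_abs
  have he : (fun k : ℤ => |(-1:ℝ) ^ k * Real.exp (-(π ^ 2 / b) * (k : ℝ) ^ 2)|)
      = fun k : ℤ => Real.exp (-(π ^ 2 / b) * (k : ℝ) ^ 2) := by
    funext k
    have h1 : |(-1:ℝ) ^ k| = 1 := by
      rcases Int.even_or_odd k with hk | hk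
      · rw [hk.neg_one_zpow]; norm_num
      · rw [Odd.neg_one_zpow hk]; norm_num
    rw [abs_mul, h1, one_mul, abs_of_pos (Real.exp_pos _)]
  rw [he]
  exact summable_th hc

lemma alt_le {b : ℝ} (hb : 0 < b) :
    (∑' k : ℤ, ((-1:ℝ) ^ k * Real.exp (-(π ^ 2 / b) * (k : ℝ) ^ 2))) ≤ th (π ^ 2 / b) := by
  have hc : 0 < π ^ 2 / b := by positivity
  refine Summable.tsum_le_tsum (fun k => ?_) (summable_alt hb) (summable_th hc)
  have h1 : ((-1:ℝ) ^ k) ≤ 1 := by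
    rcases Int.even_or_odd k with hk | hk
    · rw [hk.neg_one_zpow]
    · rw [Odd.neg_one_zpow hk]; norm_num
  calc ((-1:ℝ) ^ k) * Real.exp (-(π ^ 2 / b) * (k : ℝ) ^ 2)
      ≤ 1 * Real.exp (-(π ^ 2 / b) * (k : ℝ) ^ 2) :=
        mul_le_mul_of_nonneg_right h1 (Real.exp_pos _).le
    _ = _ := one_mul _

lemma thh_le_th {b : ℝ} (hb : 0 < b) : thh b ≤ th b := by
  rw [thh_poisson hb, th_poisson hb]
  exact mul_le_mul_of_nonneg_left (alt_le hb) (Real.sqrt_nonneg _)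

lemma t_le {c : ℝ} (hc : 0 < c) (m : ℤ) :
    (∑' k : ℤ, Real.exp (-c * ((k:ℝ) - (m:ℝ)/2) ^ 2)) ≤ th c := by
  rcases Int.even_or_odd m with ⟨j, hj⟩ | ⟨j, hj⟩
  · have e := Equiv.tsum_eq (Equiv.subRight j) (fun k : ℤ => Real.exp (-c * (k:ℝ) ^ 2))
    have h : (∑' k : ℤ, Real.exp (-c * ((k:ℝ) - (m:ℝ)/2) ^ 2)) = th c := by
      rw [th, ← e]
      refine tsum_congr fun k => ?_
      show Real.exp (-c * ((k:ℝ) - (m:ℝ)/2) ^ 2) = Real.exp (-c * (((k - j : ℤ):ℝ)) ^ 2)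
      congr 1
      push_cast [hj]
      ring
    exact le_of_eq h
  · have e := Equiv.tsum_eq (Equiv.subRight (j+1)) (fun k : ℤ => Real.exp (-c * ((k:ℝ) + 1/2) ^ 2))
    have h : (∑' k : ℤ, Real.exp (-c * ((k:ℝ) - (m:ℝ)/2) ^ 2)) = thh c := by
      rw [thh, ← e]
      refine tsum_congr fun k => ?_
      show Real.exp (-c * ((k:ℝ) - (m:ℝ)/2) ^ 2) = Real.exp (-c * (((k - (j+1) : ℤ):ℝ) + 1/2) ^ 2)
      congr 1
      push_cast [hj]
      ring
    rw [h]
    exact thh_le_th hc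

lemma hasSum_pi_prod {n : ℕ} (f : Fin n → ℤ → ℝ) (S : Fin n → ℝ)
    (h0 : ∀ i k, 0 ≤ f i k) (h : ∀ i, HasSum (f i) (S i)) :
    HasSum (fun y : Fin n → ℤ => ∏ i, f i (y i)) (∏ i, S i) := by
  induction n with
  | zero =>
      have h1 : (fun y : Fin 0 → ℤ => ∏ i, f i (y i)) = fun _ => 1 := by
        funext y; simp
      rw [h1, show (∏ i : Fin 0, S i) = 1 by simp]
      have := hasSum_single (f := fun _ : Fin 0 → ℤ => (1:ℝ)) (fun _ => (0:ℤ))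
        (fun b' hb' => absurd (Subsingleton.elim b' _) hb')
      simpa using this
  | succ n ih =>
      have h1 : HasSum (fun k : ℤ => f 0 k) (S 0) := h 0
      have h2 : HasSum (fun z : Fin n → ℤ => ∏ i : Fin n, f i.succ (z i)) (∏ i : Fin n, S i.succ) :=
        ih (fun i => f i.succ) (fun i => S i.succ) (fun i k => h0 i.succ k) (fun i => h i.succ)
      have hsum : Summable (fun p : ℤ × (Fin n → ℤ) =>
          (fun k : ℤ => f 0 k) p.1 * (fun z : Fin n → ℤ => ∏ i : Fin n, f i.succ (z i)) p.2) := by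
        apply Summable.mul_of_nonneg h1.summable h2.summable
        · exact fun k => h0 0 k
        · exact fun z => Finset.prod_nonneg fun i _ => h0 i.succ (z i)
      have hu := hsum.hasSum
      have heq := HasSum.mul_eq h1 h2 hu
      rw [← heq] at hu
      rw [Fin.prod_univ_succ]
      rw [← Equiv.hasSum_iff (Fin.consEquiv fun _ : Fin (n+1) => ℤ)]
      refine hu.congr_fun fun p => ?_
      show (∏ i : Fin (n+1), f i ((Fin.consEquiv fun _ => ℤ) p i)) = _
      simp only [Fin.consEquiv_apply]
      rw [Fin.prod_univ_succ]
      simp [Fin.cons_zero, Fin.cons_succ]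

lemma l2Z_sq {n : ℕ} (y : Fin n → ℤ) : l2Z y ^ 2 = ∑ i, ((y i : ℝ)) ^ 2 := by
  rw [l2Z, l2, Real.sq_sqrt]
  exact Finset.sum_nonneg fun i _ => sq_nonneg _

end AuxGauss

open Real

set_option maxHeartbeats 1000000 in
/-- **The self-convolution of `γ_R` is a `(1/4)`-dense piece of `γ_{√2·R}`**
(Fact 4.15): if `R ≥ √((2/π)·ln(8n))` then `(γ_R ∗ γ_R)(x) ≤ 4·γ_{√2 R}(x)`
for every `x ∈ ℤⁿ`. -/
theorem gaussian_self_convolution_bound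
    (n : ℕ) (hn : 1 ≤ n) (R : ℝ)
    (hR : Real.sqrt (2 / Real.pi * Real.log (8 * n)) ≤ R)
    (x : Fin n → ℤ) :
    conv (dgauss n R) (dgauss n R) x ≤ 4 * dgauss n (Real.sqrt 2 * R) x := by
  have hπ : (0:ℝ) < π := pi_pos
  have hn8 : (1:ℝ) < 8 * n := by
    have : (1:ℝ) ≤ (n:ℝ) := by exact_mod_cast hn
    nlinarith
  have hlog : 0 < Real.log (8 * n) := Real.log_pos hn8
  have harg : 0 < 2 / π * Real.log (8 * n) := by positivity
  have hR0 : 0 < R := lt_of_lt_of_le (Real.sqrt_pos.mpr harg) hR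
  have hRR : 2 / π * Real.log (8 * n) ≤ R ^ 2 := by
    have h := pow_le_pow_left₀ (Real.sqrt_nonneg _) hR 2
    rwa [Real.sq_sqrt harg.le] at h
  set a : ℝ := π / R ^ 2 with ha_def
  have ha : 0 < a := by positivity
  -- ### Sum values for the two radii
  have hSval : (∑' y : Fin n → ℤ, Real.exp (-π * l2Z y ^ 2 / R ^ 2)) = th a ^ n := by
    have h := hasSum_pi_prod (n := n) (fun _ k => Real.exp (-a * (k:ℝ) ^ 2)) (fun _ => th a)
      (fun _ k => (Real.exp_pos _).le) (fun _ => (summable_th ha).hasSum)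
    rw [Finset.prod_const, Finset.card_univ, Fintype.card_fin] at h
    rw [← h.tsum_eq]
    refine tsum_congr fun y => ?_
    rw [l2Z_sq, ← Real.exp_sum]
    congr 1
    rw [← Finset.mul_sum, ha_def]
    ring
  have h2R : (Real.sqrt 2 * R) ^ 2 = 2 * R ^ 2 := by
    rw [mul_pow, Real.sq_sqrt (by norm_num : (0:ℝ) ≤ 2)]
  have ha2 : 0 < a / 2 := by positivity
  have h2a : 0 < 2 * a := by positivity
  have hS2val : (∑' y : Fin n → ℤ, Real.exp (-π * l2Z y ^ 2 / (Real.sqrt 2 * R) ^ 2))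
      = th (a/2) ^ n := by
    have h := hasSum_pi_prod (n := n) (fun _ k => Real.exp (-(a/2) * (k:ℝ) ^ 2)) (fun _ => th (a/2))
      (fun _ k => (Real.exp_pos _).le) (fun _ => (summable_th ha2).hasSum)
    rw [Finset.prod_const, Finset.card_univ, Fintype.card_fin] at h
    rw [← h.tsum_eq]
    refine tsum_congr fun y => ?_
    rw [l2Z_sq, h2R, ← Real.exp_sum]
    congr 1
    rw [← Finset.mul_sum, ha_def]
    ring
  -- ### Numerator of the convolution
  set t : ℤ → ℝ := fun m => ∑' k : ℤ, Real.exp (-(2*a) * ((k:ℝ) - (m:ℝ)/2) ^ 2) with ht_def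
  have ht_nonneg : ∀ m, 0 ≤ t m := fun m => tsum_nonneg fun _ => (Real.exp_pos _).le
  have hnum : HasSum (fun y : Fin n → ℤ =>
      Real.exp (-π * l2Z y ^ 2 / R ^ 2) * Real.exp (-π * l2Z (x - y) ^ 2 / R ^ 2))
      (Real.exp (-π * l2Z x ^ 2 / (Real.sqrt 2 * R) ^ 2) * ∏ i, t (x i)) := by
    have hterm : ∀ i : Fin n, HasSum (fun k : ℤ =>
        Real.exp (-(a/2) * ((x i : ℝ)) ^ 2) * Real.exp (-(2*a) * ((k:ℝ) - ((x i : ℤ):ℝ)/2) ^ 2))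
        (Real.exp (-(a/2) * ((x i : ℝ)) ^ 2) * t (x i)) :=
      fun i => ((aux_summable_gauss' h2a _).hasSum).mul_left _
    have h := hasSum_pi_prod
      (fun i k => Real.exp (-(a/2) * ((x i : ℝ)) ^ 2) * Real.exp (-(2*a) * ((k:ℝ) - ((x i : ℤ):ℝ)/2) ^ 2))
      (fun i => Real.exp (-(a/2) * ((x i : ℝ)) ^ 2) * t (x i))
      (fun i k => mul_nonneg (Real.exp_pos _).le (Real.exp_pos _).le) hterm
    rw [Finset.prod_mul_distrib, ← Real.exp_sum] at h
    have hval : (∑ i, -(a/2) * ((x i : ℝ)) ^ 2) = -π * l2Z x ^ 2 / (Real.sqrt 2 * R) ^ 2 := by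
      rw [l2Z_sq, h2R, ← Finset.mul_sum, ha_def]
      ring
    rw [hval] at h
    refine h.congr_fun fun y => ?_
    simp only [← Real.exp_add]
    rw [← Real.exp_sum]
    congr 1
    have expand : ∀ i : Fin n, (-(a/2) * ((x i : ℝ)) ^ 2 + -(2*a) * (((y i : ℤ):ℝ) - ((x i : ℤ):ℝ)/2) ^ 2)
        = -a * ((y i : ℝ)) ^ 2 + -a * (((x i : ℝ)) - ((y i : ℝ))) ^ 2 := fun i => by ring
    rw [Finset.sum_congr rfl (fun i _ => expand i), Finset.sum_add_distrib,
      ← Finset.mul_sum, ← Finset.mul_sum, l2Z_sq, l2Z_sq]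
    have hxy : (∑ i, (((x - y) i : ℤ):ℝ) ^ 2) = ∑ i, (((x i : ℝ)) - ((y i : ℝ))) ^ 2 := by
      refine Finset.sum_congr rfl fun i _ => ?_
      push_cast [Pi.sub_apply]
      ring
    rw [hxy, ha_def]
    ring
  -- ### Closed form for the convolution and the target gaussian
  have hconv : conv (dgauss n R) (dgauss n R) x
      = (Real.exp (-π * l2Z x ^ 2 / (Real.sqrt 2 * R) ^ 2) * ∏ i, t (x i)) / (th a ^ n) ^ 2 := by
    rw [conv]
    have hterm : ∀ y : Fin n → ℤ, dgauss n R y * dgauss n R (x - y)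
        = (Real.exp (-π * l2Z y ^ 2 / R ^ 2) * Real.exp (-π * l2Z (x - y) ^ 2 / R ^ 2)) / (th a ^ n) ^ 2 := by
      intro y
      rw [dgauss, dgauss, hSval, div_mul_div_comm, ← pow_two]
    simp_rw [hterm]
    rw [tsum_div_const, hnum.tsum_eq]
  have hgauss2 : dgauss n (Real.sqrt 2 * R) x
      = Real.exp (-π * l2Z x ^ 2 / (Real.sqrt 2 * R) ^ 2) / th (a/2) ^ n := by
    rw [dgauss, hS2val]
  -- ### Numerical estimates
  set q := Real.exp (-(π * R ^ 2 / 2)) with hq_def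
  have hq0 : 0 < q := Real.exp_pos _
  have hu : 0 < π * R ^ 2 / 2 := by positivity
  have h8n : (0:ℝ) < 8 * n := lt_trans one_pos hn8
  have hq1 : q ≤ 1 / (8 * n) := by
    have hlogle : Real.log (8 * n) ≤ π * R ^ 2 / 2 := by
      have hid : π * (2 / π * Real.log (8 * n)) = 2 * Real.log (8 * n) := by
        field_simp
      nlinarith [hRR, hπ, hid]
    calc q ≤ Real.exp (-Real.log (8 * n)) := Real.exp_le_exp.mpr (by linarith)
      _ = 1 / (8 * n) := by rw [Real.exp_neg, Real.exp_log h8n, one_div]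
  have hq8 : q ≤ 1 / 8 := by
    refine hq1.trans ?_
    rw [div_le_div_iff₀ h8n (by norm_num)]
    have : (1:ℝ) ≤ (n:ℝ) := by exact_mod_cast hn
    nlinarith
  have hth1 : th (π ^ 2 / (2 * a)) ≤ 1 + 3 * q := by
    have e : π ^ 2 / (2 * a) = π * R ^ 2 / 2 := by
      rw [ha_def]; field_simp
    rw [e]
    refine (th_le hu).trans ?_
    have hqq : Real.exp (-(π * R ^ 2 / 2)) = q := rfl
    rw [hqq, div_le_iff₀ (by linarith : (0:ℝ) < 1 - q)]
    nlinarith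
  have hth2 : th (π ^ 2 / (a / 2)) ≤ 1 + 3 * q := by
    have e : π ^ 2 / (a / 2) = 2 * (π * R ^ 2) := by
      rw [ha_def]; field_simp
    rw [e]
    refine (th_anti hu (by nlinarith [sq_nonneg R] : π * R ^ 2 / 2 ≤ 2 * (π * R ^ 2))).trans ?_
    refine (th_le hu).trans ?_
    have hqq : Real.exp (-(π * R ^ 2 / 2)) = q := rfl
    rw [hqq, div_le_iff₀ (by linarith : (0:ℝ) < 1 - q)]
    nlinarith
  have hsplit : th (2 * a) * th (a / 2) ≤ (π / a) * ((1 + 3 * q) * (1 + 3 * q)) := by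
    rw [th_poisson h2a, th_poisson ha2]
    have hs : Real.sqrt (π / (2 * a)) * Real.sqrt (π / (a / 2)) = π / a := by
      rw [← Real.sqrt_mul (by positivity)]
      rw [show π / (2 * a) * (π / (a / 2)) = (π / a) ^ 2 by field_simp]
      exact Real.sqrt_sq (by positivity)
    calc (Real.sqrt (π / (2 * a)) * th (π ^ 2 / (2 * a))) * (Real.sqrt (π / (a / 2)) * th (π ^ 2 / (a / 2)))
        = (Real.sqrt (π / (2 * a)) * Real.sqrt (π / (a / 2))) * (th (π ^ 2 / (2 * a)) * th (π ^ 2 / (a / 2))) := by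
          ring
      _ ≤ (Real.sqrt (π / (2 * a)) * Real.sqrt (π / (a / 2))) * ((1 + 3 * q) * (1 + 3 * q)) := by
          refine mul_le_mul_of_nonneg_left ?_ (by positivity)
          exact mul_le_mul hth1 hth2 th_nonneg (by positivity)
      _ = (π / a) * ((1 + 3 * q) * (1 + 3 * q)) := by rw [hs]
  have hpow : ((1 + 3 * q) * (1 + 3 * q)) ^ n ≤ 4 := by
    have h1 : (1 + 3 * q) ≤ Real.exp (3 * q) := by linarith [Real.add_one_le_exp (3 * q)]
    have h2 : ((1 + 3 * q) * (1 + 3 * q)) ^ n ≤ (Real.exp (3 * q) * Real.exp (3 * q)) ^ n := by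
      refine pow_le_pow_left₀ (by positivity) ?_ n
      exact mul_le_mul h1 h1 (by positivity) (Real.exp_pos _).le
    have h3 : (Real.exp (3 * q) * Real.exp (3 * q)) ^ n = Real.exp ((n:ℝ) * (6 * q)) := by
      rw [← Real.exp_add, ← Real.exp_nat_mul]
      ring_nf
    have h4 : (n:ℝ) * (6 * q) ≤ 3 / 4 := by
      have hn' : (1:ℝ) ≤ (n:ℝ) := by exact_mod_cast hn
      have h5 := mul_le_mul_of_nonneg_left hq1 (show (0:ℝ) ≤ 6 * n by positivity)
      have h6 : (6 * (n:ℝ)) * (1 / (8 * n)) = 3 / 4 := by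
        field_simp
        ring
      nlinarith
    calc ((1 + 3 * q) * (1 + 3 * q)) ^ n ≤ Real.exp ((n:ℝ) * (6 * q)) := h2.trans (le_of_eq h3)
      _ ≤ Real.exp (3 / 4) := Real.exp_le_exp.mpr h4
      _ ≤ Real.exp 1 := Real.exp_le_exp.mpr (by norm_num)
      _ ≤ 4 := le_of_lt (lt_trans Real.exp_one_lt_d9 (by norm_num))
  have hlow : π / a ≤ th a ^ 2 := by
    have h1 : Real.sqrt (π / a) ≤ th a := by
      rw [th_poisson ha]
      have hth := th_ge_one (show 0 < π ^ 2 / a by positivity)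
      nlinarith [Real.sqrt_nonneg (π / a)]
    calc π / a = Real.sqrt (π / a) ^ 2 := (Real.sq_sqrt (by positivity)).symm
      _ ≤ th a ^ 2 := pow_le_pow_left₀ (Real.sqrt_nonneg _) h1 2
  have hT : (∏ i, t (x i)) ≤ th (2 * a) ^ n := by
    calc (∏ i, t (x i)) ≤ ∏ _i : Fin n, th (2 * a) :=
          Finset.prod_le_prod (fun i _ => ht_nonneg (x i)) (fun i _ => t_le h2a (x i))
      _ = th (2 * a) ^ n := by rw [Finset.prod_const, Finset.card_univ, Fintype.card_fin]
  have key : (∏ i, t (x i)) * th (a / 2) ^ n ≤ 4 * (th a ^ n) ^ 2 := by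
    have step1 : (∏ i, t (x i)) * th (a / 2) ^ n ≤ th (2 * a) ^ n * th (a / 2) ^ n :=
      mul_le_mul_of_nonneg_right hT (pow_nonneg th_nonneg n)
    have step3 : (th (2 * a) * th (a / 2)) ^ n ≤ ((π / a) * ((1 + 3 * q) * (1 + 3 * q))) ^ n :=
      pow_le_pow_left₀ (mul_nonneg th_nonneg th_nonneg) hsplit n
    have step5 : (π / a) ^ n * ((1 + 3 * q) * (1 + 3 * q)) ^ n ≤ (π / a) ^ n * 4 :=
      mul_le_mul_of_nonneg_left hpow (by positivity)
    have step6 : (π / a) ^ n ≤ (th a ^ 2) ^ n := pow_le_pow_left₀ (by positivity) hlow n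
    have step7 : (th a ^ 2) ^ n = (th a ^ n) ^ 2 := by
      rw [← pow_mul, ← pow_mul, Nat.mul_comm]
    calc (∏ i, t (x i)) * th (a / 2) ^ n ≤ th (2 * a) ^ n * th (a / 2) ^ n := step1
      _ = (th (2 * a) * th (a / 2)) ^ n := (mul_pow _ _ n).symm
      _ ≤ ((π / a) * ((1 + 3 * q) * (1 + 3 * q))) ^ n := step3
      _ = (π / a) ^ n * ((1 + 3 * q) * (1 + 3 * q)) ^ n := mul_pow _ _ n
      _ ≤ (π / a) ^ n * 4 := step5
      _ ≤ (th a ^ 2) ^ n * 4 := mul_le_mul_of_nonneg_right step6 (by norm_num)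
      _ = 4 * (th a ^ n) ^ 2 := by rw [step7]; ring
  -- ### Conclusion
  rw [hconv, hgauss2]
  have hE : 0 < Real.exp (-π * l2Z x ^ 2 / (Real.sqrt 2 * R) ^ 2) := Real.exp_pos _
  have hD1 : (0:ℝ) < (th a ^ n) ^ 2 := pow_pos (pow_pos (th_pos ha) n) 2
  have hD2 : (0:ℝ) < th (a / 2) ^ n := pow_pos (th_pos ha2) n
  rw [show (4:ℝ) * (Real.exp (-π * l2Z x ^ 2 / (Real.sqrt 2 * R) ^ 2) / th (a/2) ^ n)
      = (4 * Real.exp (-π * l2Z x ^ 2 / (Real.sqrt 2 * R) ^ 2)) / th (a/2) ^ n by ring]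
  rw [div_le_div_iff₀ hD1 hD2]
  calc Real.exp (-π * l2Z x ^ 2 / (Real.sqrt 2 * R) ^ 2) * (∏ i, t (x i)) * th (a/2) ^ n
      = Real.exp (-π * l2Z x ^ 2 / (Real.sqrt 2 * R) ^ 2) * ((∏ i, t (x i)) * th (a/2) ^ n) := by
        ring
    _ ≤ Real.exp (-π * l2Z x ^ 2 / (Real.sqrt 2 * R) ^ 2) * (4 * (th a ^ n) ^ 2) :=
        mul_le_mul_of_nonneg_left key hE.le
    _ = 4 * Real.exp (-π * l2Z x ^ 2 / (Real.sqrt 2 * R) ^ 2) * (th a ^ n) ^ 2 := by ring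
end
end

section
/- (Multidimensional discrete Gaussian upper bound) Let n ≥ 1, let M ∈ ℝ^{n×n} be symmetric positive definite, and let c ∈ ℝⁿ. Then ∑_{z∈ℤⁿ} exp(−π·(z−c)ᵀM(z−c)) ≤ (1 + λ_min(M)^{−1/2})ⁿ. -/
/-!
Since `λ_min(M) ‖x‖² ≤ xᵀ M x`, the summand is dominated by the product over the coordinates of the
one-dimensional Gaussians `exp (-π λ_min(M) (z_i - c_i)²)`, so the lattice sum is at most the
product of the one-dimensional sums over `ℤ`. In a sum `∑ₘ exp (-π a (m - c)²)`, shift `c` by an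
integer so that `|c| ≤ 1/2`. The term `m = 0` is at most `1`, and every other term is at most the
integral of the Gaussian over the unit interval that has `m` as its endpoint farther from `0`; these
intervals tile `ℝ`, so the sum is at most `1 + ∫ exp (-π a t²) dt = 1 + a^{-1/2}`.
-/

open scoped BigOperators

noncomputable section

/-- The smallest eigenvalue of a symmetric matrix, as the infimum of its
Rayleigh quotient over the Euclidean unit sphere. -/
def lambdaMin {n : ℕ} (A : Matrix (Fin n) (Fin n) ℝ) : ℝ :=
  ⨅ x : {x : Fin n → ℝ // ∑ i, x i ^ 2 = 1},
    dotProduct (x : Fin n → ℝ) (A.mulVec (x : Fin n → ℝ))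

open MeasureTheory Set Real Matrix

open scoped ENNReal

theorem summable_and_tsum_le_setIntegral_Ioi {f : ℝ → ℝ} {g : ℕ → ℝ} {a : ℝ}
    (hf : IntegrableOn f (Ioi a)) (hf0 : ∀ t ∈ Ioi a, 0 ≤ f t) (hg0 : ∀ k, 0 ≤ g k)
    (hgf : ∀ k : ℕ, ∀ t ∈ Ioc (a + k) (a + k + 1), g k ≤ f t) :
    Summable g ∧ ∑' k, g k ≤ ∫ t in Ioi a, f t := by
  set s : ℕ → Set ℝ := fun k => Ioc (a + k) (a + k + 1)
  have hs : ⋃ k, s k ⊆ Ioi a := iUnion_subset fun k t ht => by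
    simp only [s, mem_Ioc] at ht
    exact lt_of_le_of_lt (by simp) ht.1
  have hdisj : Pairwise (Function.onFun Disjoint s) := fun k l hkl => by
    simpa [s] using pairwise_disjoint_Ioc_add_intCast a (Nat.cast_injective.ne hkl : (k : ℤ) ≠ l)
  have hI : HasSum (fun k => ∫ t in s k, f t) (∫ t in ⋃ k, s k, f t) :=
    hasSum_integral_iUnion (fun _ => measurableSet_Ioc) hdisj (hf.mono_set hs)
  have hgI : ∀ k, g k ≤ ∫ t in s k, f t := fun k => by
    calc g k = ∫ _ in s k, g k := by simp [s]
      _ ≤ ∫ t in s k, f t :=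
        setIntegral_mono_on (integrableOn_const (by simp [s]))
          (hf.mono_set ((subset_iUnion s k).trans hs)) measurableSet_Ioc (hgf k)
  have hsum : Summable g := hI.summable.of_nonneg_of_le hg0 hgI
  refine ⟨hsum, ?_⟩
  calc ∑' k, g k ≤ ∫ t in ⋃ k, s k, f t := hI.tsum_eq ▸ hsum.tsum_le_tsum hgI hI.summable
    _ ≤ ∫ t in Ioi a, f t :=
      setIntegral_mono_set hf (ae_restrict_of_forall_mem measurableSet_Ioi hf0) hs.eventuallyLE

theorem gaussian_tsum_nat_le_integral_Ioi {b ε : ℝ} (hb : 0 < b) (hε : |ε| ≤ 1 / 2) :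
    Summable (fun k : ℕ => exp (-b * ((k : ℝ) + 1 + ε) ^ 2)) ∧
      ∑' k : ℕ, exp (-b * ((k : ℝ) + 1 + ε) ^ 2) ≤ ∫ t in Ioi ε, exp (-b * t ^ 2) := by
  refine summable_and_tsum_le_setIntegral_Ioi (integrable_exp_neg_mul_sq hb).integrableOn
    (fun t _ => (exp_pos _).le) (fun k => (exp_pos _).le) fun k t ht => ?_
  have hε' := abs_le.mp hε
  have hk : (0 : ℝ) ≤ k := k.cast_nonneg
  have ht' : t ^ 2 ≤ ((k : ℝ) + 1 + ε) ^ 2 :=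
    sq_le_sq' (by linarith [ht.1]) (by linarith [ht.2])
  exact exp_le_exp.mpr (by nlinarith)

theorem gaussian_tsum_int_le_of_abs_le_half {b c : ℝ} (hb : 0 < b) (hc : |c| ≤ 1 / 2) :
    Summable (fun m : ℤ => exp (-b * ((m : ℝ) - c) ^ 2)) ∧
      ∑' m : ℤ, exp (-b * ((m : ℝ) - c) ^ 2) ≤ 1 + √(π / b) := by
  obtain ⟨hpos, hpos_le⟩ := gaussian_tsum_nat_le_integral_Ioi hb (ε := -c) (by rwa [abs_neg])
  obtain ⟨hneg, hneg_le⟩ := gaussian_tsum_nat_le_integral_Ioi hb hc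
  have hpos_eq : ∀ k : ℕ, (((k + 1 : ℕ) : ℤ) : ℝ) - c = (k : ℝ) + 1 + -c := fun k => by
    push_cast; ring
  have hneg_eq : ∀ k : ℕ, (((-(k + 1) : ℤ) : ℝ) - c) ^ 2 = ((k : ℝ) + 1 + c) ^ 2 :=
    fun k => by push_cast; ring
  have hnat : Summable (fun k : ℕ => exp (-b * (((k : ℤ) : ℝ) - c) ^ 2)) := by
    rw [← summable_nat_add_iff 1]
    simpa only [hpos_eq] using hpos
  have hneg' : Summable (fun k : ℕ => exp (-b * (((-(k + 1) : ℤ) : ℝ) - c) ^ 2)) := by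
    simpa only [hneg_eq] using hneg
  refine ⟨.of_nat_of_neg_add_one hnat hneg', ?_⟩
  have hint := integrable_exp_neg_mul_sq hb
  have hhalves : (∫ t in Ioi (-c), exp (-b * t ^ 2)) + ∫ t in Ioi c, exp (-b * t ^ 2)
      = √(π / b) := by
    have hrefl : ∫ t in Ioi c, exp (-b * t ^ 2) = ∫ t in Iic (-c), exp (-b * t ^ 2) := by
      rw [← integral_comp_neg_Ioi]
      simp only [neg_sq]
    rw [hrefl, add_comm, intervalIntegral.integral_Iic_add_Ioi hint.integrableOn
      hint.integrableOn, integral_gaussian]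
  have hsplit : ∑' m : ℤ, exp (-b * ((m : ℝ) - c) ^ 2)
      = exp (-b * c ^ 2) + (∑' k : ℕ, exp (-b * ((k : ℝ) + 1 + -c) ^ 2))
          + ∑' k : ℕ, exp (-b * ((k : ℝ) + 1 + c) ^ 2) := by
    rw [tsum_of_nat_of_neg_add_one (f := fun m : ℤ => exp (-b * ((m : ℝ) - c) ^ 2)) hnat hneg',
      hnat.tsum_eq_zero_add]
    simp only [hpos_eq, hneg_eq, Nat.cast_zero, Int.cast_zero, zero_sub, neg_sq]
  have hcentre : exp (-b * c ^ 2) ≤ 1 := exp_le_one_iff.mpr (by nlinarith [sq_nonneg c])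
  linarith

theorem gaussian_tsum_int_le {a : ℝ} (ha : 0 < a) (c : ℝ) :
    Summable (fun m : ℤ => exp (-π * a * ((m : ℝ) - c) ^ 2)) ∧
      ∑' m : ℤ, exp (-π * a * ((m : ℝ) - c) ^ 2) ≤ 1 + a ^ (-(1 : ℝ) / 2) := by
  let e := Equiv.addRight (round c)
  have hshift : (fun m : ℤ => exp (-(π * a) * ((m : ℝ) - (c - round c)) ^ 2))
      = (fun m : ℤ => exp (-π * a * ((m : ℝ) - c) ^ 2)) ∘ e := by
    ext m; simp only [Function.comp_apply, e, Equiv.coe_addRight]; push_cast; ring_nf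
  have hroot : √(π / (π * a)) = a ^ (-(1 : ℝ) / 2) := by
    rw [div_mul_cancel_left₀ pi_ne_zero, sqrt_eq_rpow, ← rpow_neg_one, ← rpow_mul ha.le]
    norm_num
  obtain ⟨hsum, hle⟩ :=
    gaussian_tsum_int_le_of_abs_le_half (b := π * a) (by positivity) (abs_sub_round c)
  rw [hshift] at hsum hle
  rw [hroot] at hle
  exact ⟨e.summable_iff.mp hsum, e.tsum_eq (fun m : ℤ => exp (-π * a * ((m : ℝ) - c) ^ 2)) ▸ hle⟩

section LambdaMin

variable {n : ℕ} {M : Matrix (Fin n) (Fin n) ℝ}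

theorem lambdaMin_le (hM : M.PosSemidef) {x : Fin n → ℝ} (hx : ∑ i, x i ^ 2 = 1) :
    lambdaMin M ≤ x ⬝ᵥ M *ᵥ x :=
  ciInf_le (f := fun y : {y : Fin n → ℝ // ∑ i, y i ^ 2 = 1} => (y : Fin n → ℝ) ⬝ᵥ M *ᵥ y)
    ⟨0, by rintro _ ⟨y, rfl⟩; simpa using hM.dotProduct_mulVec_nonneg y⟩ ⟨x, hx⟩

theorem lambdaMin_mul_sum_sq_le (hM : M.PosSemidef) (x : Fin n → ℝ) :
    lambdaMin M * ∑ i, x i ^ 2 ≤ x ⬝ᵥ M *ᵥ x := by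
  rcases (Finset.sum_nonneg fun i _ => sq_nonneg (x i)).eq_or_lt with hs | hs
  · rw [← hs, mul_zero]
    simpa using hM.dotProduct_mulVec_nonneg x
  set r := (√(∑ i, x i ^ 2))⁻¹
  have hr : r ^ 2 * ∑ i, x i ^ 2 = 1 := by rw [inv_pow, sq_sqrt hs.le, inv_mul_cancel₀ hs.ne']
  have h := lambdaMin_le hM (x := r • x) (by simpa [mul_pow, ← Finset.mul_sum] using hr)
  rw [mulVec_smul, smul_dotProduct, dotProduct_smul, smul_smul, smul_eq_mul, ← sq] at h
  calc lambdaMin M * ∑ i, x i ^ 2 ≤ r ^ 2 * (x ⬝ᵥ M *ᵥ x) * ∑ i, x i ^ 2 :=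
        mul_le_mul_of_nonneg_right h hs.le
    _ = x ⬝ᵥ M *ᵥ x := by rw [mul_right_comm, hr, one_mul]

theorem lambdaMin_pos (hn : 0 < n) (hM : M.PosDef) : 0 < lambdaMin M := by
  let S : Set (Fin n → ℝ) := {x | ∑ i, x i ^ 2 = 1}
  have hS : IsCompact S := by
    refine (isCompact_univ_pi fun _ => isCompact_Icc (a := (-1 : ℝ)) (b := 1)).of_isClosed_subset
      (isClosed_eq (by fun_prop) continuous_const) fun x hx i _ => ?_
    have : x i ^ 2 ≤ 1 := hx ▸ Finset.single_le_sum (fun j _ => sq_nonneg (x j)) (Finset.mem_univ i)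
    exact abs_le.mp (sq_le_one_iff_abs_le_one _ |>.mp this)
  have hne : S.Nonempty := ⟨Pi.single ⟨0, hn⟩ 1, by simp [S, Pi.single_apply]⟩
  obtain ⟨x₀, hx₀, hmin⟩ :=
    hS.exists_isMinOn hne (by fun_prop : Continuous fun x => x ⬝ᵥ M *ᵥ x).continuousOn
  have hx₀ne : x₀ ≠ 0 := by rintro rfl; simp [S] at hx₀
  have : Nonempty {x : Fin n → ℝ // ∑ i, x i ^ 2 = 1} := ⟨⟨x₀, hx₀⟩⟩
  calc 0 < x₀ ⬝ᵥ M *ᵥ x₀ := by simpa using hM.dotProduct_mulVec_pos hx₀ne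
    _ ≤ lambdaMin M := le_ciInf fun x => hmin x.2

theorem exp_neg_pi_dotProduct_mulVec_le_prod (hM : M.PosSemidef) (x : Fin n → ℝ) :
    exp (-π * (x ⬝ᵥ M *ᵥ x)) ≤ ∏ i, exp (-π * lambdaMin M * x i ^ 2) := by
  rw [← exp_sum, exp_le_exp, ← Finset.mul_sum, mul_assoc]
  exact mul_le_mul_of_nonpos_left (lambdaMin_mul_sum_sq_le hM x) (by linarith [pi_pos])

end LambdaMin

theorem ENNReal.tsum_fin_pi_prod {α : Type*} :
    ∀ (n : ℕ) (g : Fin n → α → ℝ≥0∞),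
      ∑' z : Fin n → α, ∏ i, g i (z i) = ∏ i, ∑' a, g i a
  | 0, g => by simp
  | n + 1, g => by
    rw [← (Fin.consEquiv fun _ => α).tsum_eq, ENNReal.tsum_prod', Fin.prod_univ_succ,
      ← tsum_fin_pi_prod n fun i => g i.succ, ← ENNReal.tsum_mul_right]
    refine tsum_congr fun a => ?_
    rw [← ENNReal.tsum_mul_left]
    refine tsum_congr fun z => ?_
    simp [Fin.consEquiv, Fin.prod_univ_succ]

theorem summable_and_tsum_le_prod_tsum {α : Type*} {n : ℕ} {F : (Fin n → α) → ℝ}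
    {g : Fin n → α → ℝ} (hF : ∀ z, 0 ≤ F z) (hg : ∀ i a, 0 ≤ g i a)
    (hgs : ∀ i, Summable (g i)) (hFg : ∀ z, F z ≤ ∏ i, g i (z i)) :
    Summable F ∧ ∑' z, F z ≤ ∏ i, ∑' a, g i a := by
  have hprod : 0 ≤ ∏ i, ∑' a, g i a := Finset.prod_nonneg fun i _ => tsum_nonneg (hg i)
  have hbound : ∑' z, ENNReal.ofReal (F z) ≤ ENNReal.ofReal (∏ i, ∑' a, g i a) :=
    calc ∑' z, ENNReal.ofReal (F z) ≤ ∑' z, ∏ i, ENNReal.ofReal (g i (z i)) :=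
          ENNReal.tsum_le_tsum fun z => by
            rw [← ENNReal.ofReal_prod_of_nonneg fun i _ => hg i (z i)]
            exact ENNReal.ofReal_le_ofReal (hFg z)
      _ = ∏ i, ∑' a, ENNReal.ofReal (g i a) :=
          ENNReal.tsum_fin_pi_prod n fun i a => ENNReal.ofReal (g i a)
      _ = ENNReal.ofReal (∏ i, ∑' a, g i a) := by
          rw [ENNReal.ofReal_prod_of_nonneg fun i _ => tsum_nonneg (hg i)]
          exact Finset.prod_congr rfl fun i _ =>
            (ENNReal.ofReal_tsum_of_nonneg (hg i) (hgs i)).symm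
  have hsum : Summable F := by
    simpa [ENNReal.toReal_ofReal (hF _)] using
      ENNReal.summable_toReal (ne_top_of_le_ne_top ENNReal.ofReal_ne_top hbound)
  refine ⟨hsum, (ENNReal.ofReal_le_ofReal_iff hprod).mp ?_⟩
  rwa [ENNReal.ofReal_tsum_of_nonneg hF hsum]

theorem multidim_gaussian_upper_general
    (n : ℕ) (M : Matrix (Fin n) (Fin n) ℝ) (hM : M.PosDef)
    (c : Fin n → ℝ) :
    (∑' z : Fin n → ℤ,
        Real.exp (-Real.pi *
          dotProduct (fun i => (z i : ℝ) - c i)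
            (M.mulVec (fun i => (z i : ℝ) - c i))))
      ≤ (1 + lambdaMin M ^ (-(1:ℝ)/2)) ^ n := by
  have hcoord (i : Fin n) := gaussian_tsum_int_le (lambdaMin_pos i.pos hM) (c i)
  obtain ⟨-, hle⟩ := summable_and_tsum_le_prod_tsum
    (g := fun i (m : ℤ) => exp (-π * lambdaMin M * ((m : ℝ) - c i) ^ 2))
    (fun _ => (exp_pos _).le) (fun _ _ => (exp_pos _).le) (fun i => (hcoord i).1)
    fun z => exp_neg_pi_dotProduct_mulVec_le_prod hM.posSemidef _
  calc _ ≤ _ := hle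
    _ ≤ ∏ _i : Fin n, (1 + lambdaMin M ^ (-(1:ℝ)/2)) :=
        Finset.prod_le_prod (fun _ _ => tsum_nonneg fun _ => (exp_pos _).le)
          fun i _ => (hcoord i).2
    _ = _ := Fin.prod_const n _

/-- **Multidimensional discrete Gaussian upper bound** (Fact 4.3):
for any symmetric positive definite `M` and any center `c ∈ ℝⁿ`,
`∑_{z∈ℤⁿ} exp(-π(z-c)ᵀM(z-c)) ≤ (1 + λ_min(M)^{-1/2})ⁿ`. -/
theorem multidim_gaussian_upper
    (n : ℕ) (hn : 1 ≤ n) (M : Matrix (Fin n) (Fin n) ℝ) (hM : M.PosDef)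
    (c : Fin n → ℝ) :
    (∑' z : Fin n → ℤ,
        Real.exp (-Real.pi *
          dotProduct (fun i => (z i : ℝ) - c i)
            (M.mulVec (fun i => (z i : ℝ) - c i))))
      ≤ (1 + lambdaMin M ^ (-(1:ℝ)/2)) ^ n :=
  multidim_gaussian_upper_general n M hM c
end
end
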